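/- arXiv:1111.3824 — 9 statements merged into one kernel-verified Lean document; each statement's English description precedes it below -/
import Mathlib

section
/- For every integer n ≥ 2 and every sequence of N = C(2n−4, n−2) + 1 points p₁, …, p_N in ℝ², p_i = (x_i, y_i) with x₁ < x₂ < ⋯ < x_N, there exist indices i₁ < i₂ < ⋯ < i_n such that the slopes (y_{i_{j+1}} − y_{i_j})/(x_{i_{j+1}} − x_{i_j}), for j = 1, …, n−1, form a nondecreasing sequence or a nonincreasing sequence. -/
/-! Cups and caps (Erdős–Szekeres). Let `f(a, b)` points force a cup of `a + 2` or a cap of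
`b + 2` points. Among more than `f(a, b + 1) + f(a + 1, b)` points, let `L` be the set of right
endpoints of cups of `a + 2` points. The complement of `L` contains no such cup, so if it is large
it contains a cap of `b + 3` points. Otherwise `L` contains a cup of `a + 3` points, or a cap of
`b + 2` points whose left end `c` ends a cup of `a + 2` points; comparing the two slopes at `c`,
either the cup extends by the cap's second point or the cap extends by the cup's second-to-last
point. Pascal's rule then gives `f(a, b) ≤ C(a + b, a)`. -/

open Finset

namespace ErdosSzekeres

variable {α β : Type*}

def slopes (σ : α → α → β) (l : List α) : List β :=
  List.zipWith σ l l.tail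

@[simp]
theorem slopes_cons_cons (σ : α → α → β) (p q : α) (l : List α) :
    slopes σ (p :: q :: l) = σ p q :: slopes σ (q :: l) :=
  rfl

theorem slopes_reverse (σ : α → α → β) (l : List α) :
    slopes σ l.reverse = (slopes (flip σ) l).reverse := by
  apply List.ext_getElem
  · simp [slopes]
  · intro i h₁ h₂
    simp only [slopes, List.length_zipWith, List.length_tail, List.length_reverse] at h₁ h₂
    simp only [slopes, List.getElem_reverse, List.getElem_zipWith, List.getElem_tail, flip]
    congr 2 <;> simp <;> omega

theorem exists_strictMono_of_isChain_slopes [LinearOrder α] (σ : α → α → β) {R : β → β → Prop}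
    {l : List α} {n : ℕ} (hl : l.IsChain (· < ·)) (hs : (slopes σ l).IsChain R)
    (hn : l.length = n) :
    ∃ ι : Fin n → α, StrictMono ι ∧ ∀ (j : ℕ) (h : j + 2 < n),
      R (σ (ι ⟨j, by omega⟩) (ι ⟨j + 1, by omega⟩)) (σ (ι ⟨j + 1, by omega⟩) (ι ⟨j + 2, h⟩)) := by
  subst hn
  refine ⟨l.get, hl.sortedLT.strictMono_get, fun j h => ?_⟩
  simpa [slopes] using hs.getElem j (by simp [slopes]; omega)

variable [LinearOrder β]

/-- `l` is an `r`-chain along which the slopes `σ` of consecutive pairs never increase: a cap for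
`r = (· < ·)`, and a cup listed from right to left for `r = (· > ·)` and `flip σ`. -/
def IsCap (r : α → α → Prop) (σ : α → α → β) (l : List α) : Prop :=
  l.IsChain r ∧ (slopes σ l).IsChain (· ≥ ·)

theorem isCap_pair {r : α → α → Prop} {σ : α → α → β} {p q : α} :
    IsCap r σ [p, q] ↔ r p q := by
  simp [IsCap, slopes]

theorem isCap_cons_cons_cons {r : α → α → Prop} {σ : α → α → β} {p q s : α} {l : List α} :
    IsCap r σ (p :: q :: s :: l) ↔ r p q ∧ σ q s ≤ σ p q ∧ IsCap r σ (q :: s :: l) := by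
  simp only [IsCap, List.isChain_cons_cons, slopes_cons_cons]
  tauto

def CapFrom (r : α → α → Prop) (σ : α → α → β) (S : Finset α) (k : ℕ) (p : α) : Prop :=
  ∃ q l, l.length = k ∧ (∀ z ∈ p :: q :: l, z ∈ S) ∧ IsCap r σ (p :: q :: l)

theorem CapFrom.mono {r : α → α → Prop} {σ : α → α → β} {S T : Finset α} {k : ℕ} {p : α}
    (h : CapFrom r σ S k p) (hST : S ⊆ T) : CapFrom r σ T k p :=
  let ⟨q, l, hl, hS, hcap⟩ := h
  ⟨q, l, hl, fun z hz => hST (hS z hz), hcap⟩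

theorem capFrom_pair {r : α → α → Prop} (σ : α → α → β) {S : Finset α} {p q : α}
    (hp : p ∈ S) (hq : q ∈ S) (hpq : r p q) : CapFrom r σ S 0 p :=
  ⟨q, [], rfl, by simp [hp, hq], isCap_pair.mpr hpq⟩

variable [LinearOrder α]

theorem IsCap.reverse {σ : α → α → β} {l : List α} (h : IsCap (· > ·) (flip σ) l) :
    l.reverse.IsChain (· < ·) ∧ (slopes σ l.reverse).IsChain (· ≤ ·) := by
  rw [slopes_reverse, List.isChain_reverse, List.isChain_reverse]
  exact h

theorem IsCap.cup_or_cap {σ : α → α → β} {p c d : α} {u v : List α}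
    (hcup : IsCap (· > ·) (flip σ) (c :: p :: u)) (hcap : IsCap (· < ·) σ (c :: d :: v)) :
    IsCap (· > ·) (flip σ) (d :: c :: p :: u) ∨ IsCap (· < ·) σ (p :: c :: d :: v) := by
  have hcd : c < d := (List.isChain_cons_cons.mp hcap.1).1
  have hpc : p < c := (List.isChain_cons_cons.mp hcup.1).1
  by_cases h : σ p c ≤ σ c d
  · exact .inl (isCap_cons_cons_cons.mpr ⟨hcd, h, hcup⟩)
  · exact .inr (isCap_cons_cons_cons.mpr ⟨hpc, (not_le.mp h).le, hcap⟩)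

variable (σ : α → α → β)

theorem exists_cup_and_cap_of_one_lt_card (S : Finset α) (hS : 1 < #S) :
    (∃ p, CapFrom (· > ·) (flip σ) S 0 p) ∧ ∃ p, CapFrom (· < ·) σ S 0 p := by
  obtain ⟨p, hp, q, hq, hpq⟩ := one_lt_card.mp hS
  wlog h : p < q generalizing p q
  · exact this q hq p hp (Ne.symm hpq) ((Ne.symm hpq).lt_of_le (not_lt.mp h))
  exact ⟨⟨q, capFrom_pair _ hq hp h⟩, ⟨p, capFrom_pair _ hp hq h⟩⟩

theorem exists_cup_or_cap_succ_succ {a b : ℕ}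
    (ih_cup : ∀ T : Finset α, (a + (b + 1)).choose a < #T →
      (∃ p, CapFrom (· > ·) (flip σ) T a p) ∨ ∃ p, CapFrom (· < ·) σ T (b + 1) p)
    (ih_cap : ∀ T : Finset α, (a + 1 + b).choose (a + 1) < #T →
      (∃ p, CapFrom (· > ·) (flip σ) T (a + 1) p) ∨ ∃ p, CapFrom (· < ·) σ T b p)
    (S : Finset α) (hS : (a + 1 + (b + 1)).choose (a + 1) < #S) :
    (∃ p, CapFrom (· > ·) (flip σ) S (a + 1) p) ∨ ∃ p, CapFrom (· < ·) σ S (b + 1) p := by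
  classical
  set L := S.filter (CapFrom (· > ·) (flip σ) S a)
  have hpascal : (a + 1 + (b + 1)).choose (a + 1) =
      (a + (b + 1)).choose a + (a + 1 + b).choose (a + 1) := by
    rw [show a + 1 + (b + 1) = a + 1 + b + 1 by omega, Nat.choose_succ_succ,
      show a + 1 + b = a + (b + 1) by omega]
  have hsplit : #(S \ L) + #L = #S := card_sdiff_add_card_eq_card (filter_subset _ S)
  by_cases hsmall : (a + (b + 1)).choose a < #(S \ L)
  · rcases ih_cup (S \ L) hsmall with ⟨p, hp⟩ | ⟨p, hp⟩
    · obtain ⟨q, l, -, hmem, -⟩ := id hp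
      have hpSL := mem_sdiff.mp (hmem p List.mem_cons_self)
      exact absurd (mem_filter.mpr ⟨hpSL.1, hp.mono sdiff_subset⟩) hpSL.2
    · exact .inr ⟨p, hp.mono sdiff_subset⟩
  rcases ih_cap L (by omega) with ⟨p, hp⟩ | ⟨c, d, v, hv, hmemv, hcap⟩
  · exact .inl ⟨p, hp.mono (filter_subset _ S)⟩
  obtain ⟨-, p, u, hu, hmemu, hcup⟩ := mem_filter.mp (hmemv c List.mem_cons_self)
  have hmemv' : ∀ z ∈ c :: d :: v, z ∈ S := fun z hz => filter_subset _ S (hmemv z hz)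
  rcases hcup.cup_or_cap hcap with h | h
  · refine .inl ⟨d, c, p :: u, by simp [hu], ?_, h⟩
    simp only [List.forall_mem_cons] at hmemu hmemv' ⊢
    tauto
  · refine .inr ⟨p, c, d :: v, by simp [hv], ?_, h⟩
    simp only [List.forall_mem_cons] at hmemu hmemv' ⊢
    tauto

theorem exists_cup_or_cap (a b : ℕ) (S : Finset α) (hS : (a + b).choose a < #S) :
    (∃ p, CapFrom (· > ·) (flip σ) S a p) ∨ ∃ p, CapFrom (· < ·) σ S b p := by
  induction a generalizing b S with
  | zero => exact .inl (exists_cup_and_cap_of_one_lt_card σ S (by simpa using hS)).1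
  | succ a iha =>
    induction b generalizing S with
    | zero => exact .inr (exists_cup_and_cap_of_one_lt_card σ S (by simpa using hS)).2
    | succ b ihb => exact exists_cup_or_cap_succ_succ σ (iha (b + 1)) ihb S hS

end ErdosSzekeres

open ErdosSzekeres in
/-- **Erdős–Szekeres theorem on convex/concave configurations.**
For every `n ≥ 2` and every sequence of `N = C(2n-4, n-2) + 1` points in the plane,
given by `pᵢ = (x i, y i)` with strictly increasing `x`-coordinates, there exist
indices `i₁ < ⋯ < iₙ` such that the slopes of consecutive segments form a
nondecreasing or a nonincreasing sequence. -/
theorem stmt1 (n : ℕ) (hn : 2 ≤ n)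
    (x y : Fin (Nat.choose (2 * n - 4) (n - 2) + 1) → ℝ) :
    ∃ ι : Fin n → Fin (Nat.choose (2 * n - 4) (n - 2) + 1), StrictMono ι ∧
      ((∀ (j : ℕ) (h : j + 2 < n),
          (y (ι ⟨j + 1, by omega⟩) - y (ι ⟨j, by omega⟩)) /
              (x (ι ⟨j + 1, by omega⟩) - x (ι ⟨j, by omega⟩)) ≤
            (y (ι ⟨j + 2, h⟩) - y (ι ⟨j + 1, by omega⟩)) /
              (x (ι ⟨j + 2, h⟩) - x (ι ⟨j + 1, by omega⟩))) ∨
       (∀ (j : ℕ) (h : j + 2 < n),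
          (y (ι ⟨j + 2, h⟩) - y (ι ⟨j + 1, by omega⟩)) /
              (x (ι ⟨j + 2, h⟩) - x (ι ⟨j + 1, by omega⟩)) ≤
            (y (ι ⟨j + 1, by omega⟩) - y (ι ⟨j, by omega⟩)) /
              (x (ι ⟨j + 1, by omega⟩) - x (ι ⟨j, by omega⟩)))) := by
  have hcard : (n - 2 + (n - 2)).choose (n - 2) <
      #(univ : Finset (Fin ((2 * n - 4).choose (n - 2) + 1))) := by
    rw [card_univ, Fintype.card_fin, show n - 2 + (n - 2) = 2 * n - 4 by omega]
    exact Nat.lt_succ_self _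
  rcases exists_cup_or_cap (fun i j => (y j - y i) / (x j - x i)) _ _ _ hcard with
    ⟨p, q, l, hl, -, hcup⟩ | ⟨p, q, l, hl, -, hcap⟩
  · obtain ⟨hmono, hslopes⟩ := hcup.reverse
    obtain ⟨ι, hι, hs⟩ :=
      exists_strictMono_of_isChain_slopes _ hmono hslopes (n := n) (by simp; omega)
    exact ⟨ι, hι, .inl hs⟩
  · obtain ⟨ι, hι, hs⟩ :=
      exists_strictMono_of_isChain_slopes _ hcap.1 hcap.2 (n := n) (by simp; omega)
    exact ⟨ι, hι, .inr hs⟩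
end

section
/- For all integers k ≥ 1 and n ≥ 1 there exists N such that every set of N points in the plane in k-general position contains an n-point kth-order monotone subset. -/
/-!
Colour each `(k+1)`-subset of the plane by whether the `k`-th divided difference of its points,
listed by increasing `x`-coordinate, is nonnegative. By the hypergraph Ramsey theorem a large
enough point set has an `n`-subset on which this colouring is constant, and such a subset is
`k`-th order monotone.

Ramsey's theorem is proved by the Erdős–Rado argument: `r`-uniform Ramsey yields large sets on
which the colour of an `(r+1)`-set depends only on its minimum, and pigeonholing the colours
attached to the minima gives a monochromatic subset of half the size.
-/

/-- The `m`-th divided difference `Δ_m(p₁, …, p_{m+1})` of a tuple of points in the plane. -/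
noncomputable def divdiff : (m : ℕ) → (Fin (m + 1) → ℝ × ℝ) → ℝ
  | 0, p => (p 0).2
  | m + 1, p =>
      (divdiff m (fun i => p i.succ) - divdiff m (fun i => p i.castSucc)) /
        ((p (Fin.last (m + 1))).1 - (p 0).1)

/-- A finite planar point set is in `k`-general position if its points have pairwise distinct
`x`-coordinates and no `k+1` of its points lie on the graph of a polynomial of degree
at most `k-1`. -/
def KGenPos (k : ℕ) (P : Finset (ℝ × ℝ)) : Prop :=
  (∀ p ∈ P, ∀ q ∈ P, p.1 = q.1 → p = q) ∧
  ∀ g : Polynomial ℝ, g.degree < (k : WithBot ℕ) →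
    ∀ T ⊆ P, (∀ p ∈ T, Polynomial.eval p.1 g = p.2) → T.card ≤ k

/-- A planar point set `S` is `k`-th order monotone if the `k`-th divided difference of every
`(k+1)`-tuple of its points (listed in increasing order of `x`-coordinates) is nonnegative,
or every such divided difference is nonpositive. -/
def KOrderMonotone (k : ℕ) (S : Finset (ℝ × ℝ)) : Prop :=
  (∀ q : Fin (k + 1) → ℝ × ℝ, (∀ i, q i ∈ S) →
      StrictMono (fun i => (q i).1) → 0 ≤ divdiff k q) ∨
  (∀ q : Fin (k + 1) → ℝ × ℝ, (∀ i, q i ∈ S) →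
      StrictMono (fun i => (q i).1) → divdiff k q ≤ 0)

open Finset

section Ramsey

variable {α : Type*}

/-- The predicate `c` is read as a two-colouring of finite sets, with colour classes `c` and
`¬ c`. -/
def IsMonochromatic (c : Finset α → Prop) (r : ℕ) (S : Finset α) : Prop :=
  ∃ P : Prop, ∀ T ⊆ S, #T = r → (c T ↔ P)

lemma isMonochromatic_zero (c : Finset α → Prop) (S : Finset α) : IsMonochromatic c 0 S :=
  ⟨c ∅, fun T _ hT => by rw [card_eq_zero.1 hT]⟩

variable [LinearOrder α]

/-- The colour of an `(r+1)`-subset of `S` depends only on its least element. -/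
def IsMinHomogeneous (c : Finset α → Prop) (r : ℕ) (S : Finset α) : Prop :=
  ∃ f : α → Prop, ∀ v ∈ S, ∀ T ⊆ S, #T = r → (∀ u ∈ T, v < u) → (c (insert v T) ↔ f v)

lemma exists_isMinHomogeneous_subset {r : ℕ}
    (hr : ∀ m, ∃ N, ∀ (V : Finset α) (c : Finset α → Prop), N ≤ #V →
      ∃ S ⊆ V, #S = m ∧ IsMonochromatic c r S) (L : ℕ) :
    ∃ M, ∀ (V : Finset α) (c : Finset α → Prop), M ≤ #V →
      ∃ S ⊆ V, #S = L ∧ IsMinHomogeneous c r S := by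
  induction L with
  | zero => exact ⟨0, fun V c _ => ⟨∅, empty_subset V, rfl, fun _ => True, by simp⟩⟩
  | succ L ih =>
    obtain ⟨M, hM⟩ := ih
    obtain ⟨N, hN⟩ := hr M
    refine ⟨N + 1, fun V c hV => ?_⟩
    have hVne : V.Nonempty := card_pos.1 (by omega)
    set v := V.min' hVne
    obtain ⟨S', hS'V, hS', P, hP⟩ :=
      hN (V.erase v) (fun T => c (insert v T)) (by rw [card_erase_of_mem (min'_mem V hVne)]; omega)
    obtain ⟨S, hSS', hS, f, hf⟩ := hM S' c hS'.ge
    have hSV : S ⊆ V.erase v := hSS'.trans hS'V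
    have hvS : v ∉ S := fun hv => (mem_erase.1 (hSV hv)).1 rfl
    have hvSV : insert v S ⊆ V := insert_subset (min'_mem V hVne) (hSV.trans (erase_subset v V))
    refine ⟨insert v S, hvSV, by rw [card_insert_of_notMem hvS, hS], Function.update f v P, ?_⟩
    intro w hw T hT hTr hwT
    have hvT : v ∉ T := fun hv => (hwT v hv).not_ge (min'_le V w (hvSV hw))
    have hTS : T ⊆ S := (subset_insert_iff_of_notMem hvT).1 hT
    rcases mem_insert.1 hw with rfl | hwS
    · rw [Function.update_self]
      exact hP T (hTS.trans hSS') hTr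
    · rw [Function.update_of_ne (ne_of_mem_of_not_mem hwS hvS)]
      exact hf w hwS T hTS hTr hwT

lemma IsMinHomogeneous.exists_isMonochromatic_subset {c : Finset α → Prop} {r n : ℕ}
    {S : Finset α} (h : IsMinHomogeneous c r S) (hS : 2 * n ≤ #S) :
    ∃ S' ⊆ S, #S' = n ∧ IsMonochromatic c (r + 1) S' := by
  classical
  obtain ⟨f, hf⟩ := h
  obtain ⟨P, -, hP⟩ := exists_le_card_fiber_of_mul_le_card_of_maps_to (f := f)
    (fun _ _ => mem_univ _) univ_nonempty (by simpa using hS)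
  obtain ⟨S', hS'P, hS'⟩ := exists_subset_card_eq hP
  have hS'S : S' ⊆ S := hS'P.trans (filter_subset _ _)
  refine ⟨S', hS'S, hS', P, fun T hT hTr => ?_⟩
  have hTne : T.Nonempty := card_pos.1 (by omega)
  have hvT : T.min' hTne ∈ T := min'_mem T hTne
  have hfv : f (T.min' hTne) = P := (mem_filter.1 (hS'P (hT hvT))).2
  rw [← insert_erase hvT, hf _ (hS'S (hT hvT)) _ ((erase_subset _ T).trans (hT.trans hS'S))
    (by rw [card_erase_of_mem hvT, hTr]; rfl) (fun u hu => min'_lt_of_mem_erase_min' T hTne hu),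
    hfv]

end Ramsey

theorem exists_isMonochromatic_subset (α : Type*) (r n : ℕ) :
    ∃ N, ∀ (V : Finset α) (c : Finset α → Prop), N ≤ #V →
      ∃ S ⊆ V, #S = n ∧ IsMonochromatic c r S := by
  let : LinearOrder α := IsWellOrder.linearOrder WellOrderingRel
  induction r generalizing n with
  | zero =>
    refine ⟨n, fun V c hV => ?_⟩
    obtain ⟨S, hSV, hS⟩ := exists_subset_card_eq hV
    exact ⟨S, hSV, hS, isMonochromatic_zero c S⟩
  | succ r ih =>
    obtain ⟨M, hM⟩ := exists_isMinHomogeneous_subset ih (2 * n)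
    refine ⟨M, fun V c hV => ?_⟩
    obtain ⟨S, hSV, hS, hmin⟩ := hM V c hV
    obtain ⟨S', hS'S, hS', hmono⟩ := hmin.exists_isMonochromatic_subset hS.ge
    exact ⟨S', hS'S.trans hSV, hS', hmono⟩

def DivdiffNonneg (k : ℕ) (T : Finset (ℝ × ℝ)) : Prop :=
  ∀ q : Fin (k + 1) → ℝ × ℝ, (∀ i, q i ∈ T) → StrictMono (fun i => (q i).1) → 0 ≤ divdiff k q

lemma eq_of_strictMono_fst_of_forall_mem_range {m : ℕ} {q q' : Fin m → ℝ × ℝ}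
    (hq : StrictMono fun i => (q i).1) (hq' : StrictMono fun i => (q' i).1)
    (h : ∀ i, q' i ∈ Set.range q) : q' = q := by
  choose e he using h
  have he_mono : StrictMono e := fun i j hij => hq.lt_iff_lt.1 (by simpa only [he] using hq' hij)
  have he_id : e = id := (he_mono.range_inj strictMono_id).1 <| by
    rw [Set.range_id, Set.range_eq_univ]
    exact Finite.injective_iff_surjective.1 he_mono.injective
  funext i
  rw [← he i, he_id, id]

lemma kOrderMonotone_of_isMonochromatic {k : ℕ} {S : Finset (ℝ × ℝ)}
    (h : IsMonochromatic (DivdiffNonneg k) (k + 1) S) : KOrderMonotone k S := by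
  classical
  obtain ⟨P, hP⟩ := h
  have hcolour : ∀ q : Fin (k + 1) → ℝ × ℝ, (∀ i, q i ∈ S) → StrictMono (fun i => (q i).1) →
      (DivdiffNonneg k (univ.image q) ↔ P) := fun q hqS hq =>
    hP _ (image_subset_iff.2 fun i _ => hqS i) <| by
      rw [card_image_of_injective _ (hq.injective.of_comp (f := Prod.fst)), card_univ,
        Fintype.card_fin]
  by_cases hPtrue : P
  · exact Or.inl fun q hqS hq =>
      (hcolour q hqS hq).2 hPtrue q (fun i => mem_image_of_mem q (mem_univ i)) hq
  · refine Or.inr fun q hqS hq => le_of_not_ge fun hpos => hPtrue ?_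
    refine (hcolour q hqS hq).1 fun q' hq'T hq' => ?_
    have hq'q : q' = q := eq_of_strictMono_fst_of_forall_mem_range hq hq' fun i => by
      simpa using hq'T i
    rw [hq'q]
    exact hpos

theorem stmt2_general (k n : ℕ) :
    ∃ N : ℕ, ∀ P : Finset (ℝ × ℝ), P.card = N → KGenPos k P →
      ∃ S ⊆ P, S.card = n ∧ KOrderMonotone k S := by
  obtain ⟨N, hN⟩ := exists_isMonochromatic_subset (ℝ × ℝ) (k + 1) n
  refine ⟨N, fun P hP _ => ?_⟩
  obtain ⟨S, hSP, hS, hmono⟩ := hN P (DivdiffNonneg k) hP.ge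
  exact ⟨S, hSP, hS, kOrderMonotone_of_isMonochromatic hmono⟩

/-- **Ramsey-type theorem for `k`-th order monotone subsets** (Proposition 1.3):
for all `k ≥ 1` and `n ≥ 1` there exists `N` such that every `N`-point planar set in
`k`-general position contains an `n`-point `k`-th order monotone subset. -/
theorem stmt2 (k n : ℕ) (hk : 1 ≤ k) (hn : 1 ≤ n) :
    ∃ N : ℕ, ∀ P : Finset (ℝ × ℝ), P.card = N → KGenPos k P →
      ∃ S ⊆ P, S.card = n ∧ KOrderMonotone k S :=
  stmt2_general k n
end

section
/- Let k ≥ 1 and let p₁, …, p_{k+1} be points in ℝ², p_i = (x_i, y_i) with x₁ < ⋯ < x_{k+1}. Then there exists a k-times differentiable function f : ℝ → ℝ with f^{(k)}(x) ≥ 0 for all x ∈ ℝ and f(x_i) = y_i for all i, if and only if Δ_k(p₁, …, p_{k+1}) ≥ 0; symmetrically, such an f with f^{(k)} ≤ 0 everywhere exists if and only if Δ_k(p₁, …, p_{k+1}) ≤ 0. Moreover, if the points are in k-general position then Δ_k(p₁, …, p_{k+1}) ≠ 0, so exactly one of the two alternatives holds. -/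
open Polynomial

def HasDerivChain (n : ℕ) (F : ℕ → ℝ → ℝ) : Prop :=
  ∀ j < n, ∀ x : ℝ, HasDerivAt (F j) (F (j + 1) x) x

namespace HasDerivChain

variable {n : ℕ} {F G : ℕ → ℝ → ℝ}

lemma sub (hF : HasDerivChain n F) (hG : HasDerivChain n G) : HasDerivChain n (F - G) :=
  fun j hj x => (hF j hj x).sub (hG j hj x)

lemma tail (hF : HasDerivChain (n + 1) F) : HasDerivChain n fun j => F (j + 1) :=
  fun j hj x => hF (j + 1) (Nat.succ_lt_succ hj) x

lemma exists_eq_zero (hF : HasDerivChain n F) {x : Fin (n + 1) → ℝ} (hx : StrictMono x)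
    (hzero : ∀ i, F 0 (x i) = 0) : ∃ ξ, F n ξ = 0 := by
  induction n generalizing F with
  | zero => exact ⟨x 0, hzero 0⟩
  | succ n ih =>
    have hF₀ : ∀ y, HasDerivAt (F 0) (F 1 y) y := hF 0 n.succ_pos
    have rolle : ∀ i : Fin (n + 1), ∃ c ∈ Set.Ioo (x i.castSucc) (x i.succ), F 1 c = 0 :=
      fun i => exists_hasDerivAt_eq_zero (hx Fin.castSucc_lt_succ)
        (fun y _ => (hF₀ y).continuousAt.continuousWithinAt)
        (by rw [hzero, hzero]) (fun y _ => hF₀ y)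
    choose ξ hξ hξzero using rolle
    have hξmono : StrictMono ξ := Fin.strictMono_iff_lt_succ.mpr fun i =>
      (hξ i.castSucc).2.trans (hξ i.succ).1
    exact ih hF.tail hξmono hξzero

end HasDerivChain

lemma hasDerivChain_iterate_derivative (P : ℝ[X]) (n : ℕ) :
    HasDerivChain n fun j x => (derivative^[j] P).eval x := fun j _ x => by
  simp only [Function.iterate_succ_apply']
  exact (derivative^[j] P).hasDerivAt x

lemma iterate_derivative_eq_C_of_natDegree_le {R : Type*} [CommSemiring R] {P : R[X]} {k : ℕ}
    (h : P.natDegree ≤ k) : derivative^[k] P = C ((k.factorial : R) * P.coeff k) := by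
  have hdeg : (derivative^[k] P).natDegree = 0 :=
    Nat.eq_zero_of_le_zero ((natDegree_iterate_derivative P k).trans (by omega))
  rw [eq_C_of_natDegree_eq_zero hdeg, coeff_iterate_derivative, zero_add,
    Nat.descFactorial_self, nsmul_eq_mul]

lemma exists_interpolating_polynomial : ∀ (m : ℕ) (p : Fin (m + 1) → ℝ × ℝ),
    StrictMono (fun i => (p i).1) →
    ∃ P : ℝ[X], P.natDegree ≤ m ∧ P.coeff m = divdiff m p ∧ ∀ i, P.eval (p i).1 = (p i).2
  | 0, p, _ => ⟨C (p 0).2, by simp, by simp [divdiff], fun i => by simp [Fin.fin_one_eq_zero i]⟩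
  | m + 1, p, hx => by
    obtain ⟨P₁, hdeg₁, hcoeff₁, heval₁⟩ :=
      exists_interpolating_polynomial m (fun i => p i.castSucc) (hx.comp Fin.strictMono_castSucc)
    obtain ⟨P₂, hdeg₂, hcoeff₂, heval₂⟩ :=
      exists_interpolating_polynomial m (fun i => p i.succ) (hx.comp (Fin.strictMono_succ))
    set a := (p 0).1
    set b := (p (Fin.last (m + 1))).1
    have hab : b - a ≠ 0 := sub_ne_zero.mpr (hx (Fin.last_pos (n := m))).ne'
    refine ⟨C (b - a)⁻¹ * (P₂ * (X - C a) - P₁ * (X - C b)), ?_, ?_, fun j => ?_⟩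
    · have hmul : ∀ (Q : ℝ[X]) (c : ℝ), Q.natDegree ≤ m → (Q * (X - C c)).natDegree ≤ m + 1 :=
        fun Q c hQ => natDegree_mul_le.trans (add_le_add hQ (natDegree_X_sub_C_le c))
      exact (natDegree_C_mul_le _ _).trans ((natDegree_sub_le _ _).trans
        (max_le (hmul P₂ a hdeg₂) (hmul P₁ b hdeg₁)))
    · rw [coeff_C_mul, coeff_sub, coeff_mul_X_sub_C, coeff_mul_X_sub_C, hcoeff₁, hcoeff₂,
        coeff_eq_zero_of_natDegree_lt (hdeg₁.trans_lt m.lt_succ_self),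
        coeff_eq_zero_of_natDegree_lt (hdeg₂.trans_lt m.lt_succ_self), divdiff]
      ring
    · have h₂ : ((p j).1 - a) * P₂.eval (p j).1 = ((p j).1 - a) * (p j).2 := by
        cases j using Fin.cases with
        | zero => simp [a]
        | succ i => rw [heval₂ i]
      have h₁ : ((p j).1 - b) * P₁.eval (p j).1 = ((p j).1 - b) * (p j).2 := by
        cases j using Fin.lastCases with
        | last => simp [b]
        | cast i => rw [heval₁ i]
      simp only [eval_mul, eval_C, eval_sub, eval_X]
      field_simp
      linear_combination h₂ - h₁

section

variable {k : ℕ} {p : Fin (k + 1) → ℝ × ℝ}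

lemma exists_eq_factorial_mul_divdiff (hx : StrictMono fun i => (p i).1) {F : ℕ → ℝ → ℝ}
    (hF : HasDerivChain k F) (hinterp : ∀ i, F 0 (p i).1 = (p i).2) :
    ∃ ξ, F k ξ = k.factorial * divdiff k p := by
  obtain ⟨P, hdeg, hcoeff, heval⟩ := exists_interpolating_polynomial k p hx
  obtain ⟨ξ, hξ⟩ := (hF.sub (hasDerivChain_iterate_derivative P k)).exists_eq_zero hx
    fun i => by simp [hinterp, heval]
  refine ⟨ξ, ?_⟩
  rw [Pi.sub_apply, Pi.sub_apply, iterate_derivative_eq_C_of_natDegree_le hdeg, eval_C,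
    hcoeff, sub_eq_zero] at hξ
  exact hξ

lemma exists_hasDerivChain_interpolating_iff (hx : StrictMono fun i => (p i).1) (S : ℝ → Prop) :
    (∃ F, HasDerivChain k F ∧ (∀ x, S (F k x)) ∧ ∀ i, F 0 (p i).1 = (p i).2) ↔
      S (k.factorial * divdiff k p) := by
  constructor
  · rintro ⟨F, hF, hS, hinterp⟩
    obtain ⟨ξ, hξ⟩ := exists_eq_factorial_mul_divdiff hx hF hinterp
    exact hξ ▸ hS ξ
  · intro hS
    obtain ⟨P, hdeg, hcoeff, heval⟩ := exists_interpolating_polynomial k p hx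
    refine ⟨_, hasDerivChain_iterate_derivative P k, fun x => ?_, fun i => heval i⟩
    rwa [iterate_derivative_eq_C_of_natDegree_le hdeg, eval_C, hcoeff]

lemma exists_interpolating_degree_lt_of_divdiff_eq_zero (hx : StrictMono fun i => (p i).1)
    (hzero : divdiff k p = 0) :
    ∃ g : ℝ[X], g.degree < k ∧ ∀ i, g.eval (p i).1 = (p i).2 := by
  obtain ⟨P, hdeg, hcoeff, heval⟩ := exists_interpolating_polynomial k p hx
  refine ⟨P, degree_lt_iff_coeff_zero _ _ |>.mpr fun m hm => ?_, heval⟩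
  obtain rfl | hlt := (Nat.cast_le.mp hm).eq_or_lt
  · rw [hcoeff, hzero]
  · exact coeff_eq_zero_of_natDegree_lt (hdeg.trans_lt hlt)

end

theorem stmt5_general (k : ℕ) (p : Fin (k + 1) → ℝ × ℝ)
    (hx : StrictMono fun i => (p i).1) :
    ((∃ F : ℕ → ℝ → ℝ, (∀ j < k, ∀ x : ℝ, HasDerivAt (F j) (F (j + 1) x) x) ∧
        (∀ x : ℝ, 0 ≤ F k x) ∧ (∀ i, F 0 (p i).1 = (p i).2)) ↔ 0 ≤ divdiff k p) ∧
    ((∃ F : ℕ → ℝ → ℝ, (∀ j < k, ∀ x : ℝ, HasDerivAt (F j) (F (j + 1) x) x) ∧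
        (∀ x : ℝ, F k x ≤ 0) ∧ (∀ i, F 0 (p i).1 = (p i).2)) ↔ divdiff k p ≤ 0) ∧
    ((∀ g : Polynomial ℝ, g.degree < (k : WithBot ℕ) →
        ∃ i, Polynomial.eval (p i).1 g ≠ (p i).2) → divdiff k p ≠ 0) := by
  have hfac : (0 : ℝ) < k.factorial := mod_cast k.factorial_pos
  refine ⟨?_, ?_, fun hgen hzero => ?_⟩
  · exact (exists_hasDerivChain_interpolating_iff hx (0 ≤ ·)).trans
      (mul_nonneg_iff_of_pos_left hfac)
  · exact (exists_hasDerivChain_interpolating_iff hx (· ≤ 0)).trans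
      (by simpa using mul_le_mul_iff_right₀ (c := 0) hfac)
  · obtain ⟨g, hdeg, heval⟩ := exists_interpolating_degree_lt_of_divdiff_eq_zero hx hzero
    obtain ⟨i, hi⟩ := hgen g hdeg
    exact hi (heval i)

/-- **Characterization of positive/negative `(k+1)`-tuples** (Corollary 2.3):
for `x₁ < ⋯ < x_{k+1}`, the points lie on the graph of a `k`-times differentiable function
`f = F 0` (with successive derivatives `F 1, …, F k`) whose `k`-th derivative is everywhere
nonnegative iff `Δ_k(p₁, …, p_{k+1}) ≥ 0`; symmetrically for nonpositive `k`-th derivative and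
`Δ_k ≤ 0`. Moreover, if the points are in `k`-general position (no `k+1` of them on the graph of
a polynomial of degree at most `k-1`) then `Δ_k(p₁, …, p_{k+1}) ≠ 0`, so exactly one of the
two alternatives holds. -/
theorem stmt5 (k : ℕ) (hk : 1 ≤ k) (p : Fin (k + 1) → ℝ × ℝ)
    (hx : StrictMono fun i => (p i).1) :
    ((∃ F : ℕ → ℝ → ℝ, (∀ j < k, ∀ x : ℝ, HasDerivAt (F j) (F (j + 1) x) x) ∧
        (∀ x : ℝ, 0 ≤ F k x) ∧ (∀ i, F 0 (p i).1 = (p i).2)) ↔ 0 ≤ divdiff k p) ∧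
    ((∃ F : ℕ → ℝ → ℝ, (∀ j < k, ∀ x : ℝ, HasDerivAt (F j) (F (j + 1) x) x) ∧
        (∀ x : ℝ, F k x ≤ 0) ∧ (∀ i, F 0 (p i).1 = (p i).2)) ↔ divdiff k p ≤ 0) ∧
    ((∀ g : Polynomial ℝ, g.degree < (k : WithBot ℕ) →
        ∃ i, Polynomial.eval (p i).1 g ≠ (p i).2) → divdiff k p ≠ 0) :=
  stmt5_general k p hx
end

section
/- Let k ≥ 1 and let K = {p₁, …, p_{k+1}} be points in ℝ² in k-general position, p_i = (x_i, y_i) with x₁ < ⋯ < x_{k+1}. Fix i ∈ {1, …, k+1} and let f_i be the unique polynomial of degree at most k−1 whose graph passes through the k points of K ∖ {p_i}. Then the sign of Δ_k(p₁, …, p_{k+1}) equals (−1)^{k−i} if y_i < f_i(x_i), and equals (−1)^{k+1−i} if y_i > f_i(x_i). -/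
/-!
Neville's identity `(x_{m+1} - x_0) P = (X - x_0) Q₁ - (X - x_{m+1}) Q₀` shows, by induction on `m`,
that `Δ_m(p₀, …, p_m)` is the coefficient of `X^m` in any polynomial of degree at most `m` through
the points. Applied to `f + (yᵢ - f(xᵢ)) ℓᵢ`, where `ℓᵢ` is the Lagrange basis polynomial at `xᵢ`,
this gives `Δ_k = (yᵢ - f(xᵢ)) / ∏_{l ≠ i} (xᵢ - x_l)`, and exactly `k - i` factors of that
product are negative.
-/

open Polynomial Finset

section Interpolation

variable {F : Type*} [Field F] {m : ℕ}

theorem exists_degree_le_eval_eq (x y : Fin (m + 1) → F) (hx : Function.Injective x) :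
    ∃ Q : F[X], Q.degree ≤ m ∧ ∀ j, Q.eval (x j) = y j := by
  refine ⟨Lagrange.interpolate univ x y, ?_, fun j =>
    Lagrange.eval_interpolate_at_node y hx.injOn (mem_univ j)⟩
  simpa using Lagrange.degree_interpolate_le y (s := univ) hx.injOn

theorem coeff_X_sub_C_mul_of_degree_le (a : F) {Q : F[X]} (hQ : Q.degree ≤ m) :
    ((X - C a) * Q).coeff (m + 1) = Q.coeff m := by
  rw [coeff_X_sub_C_mul, coeff_eq_zero_of_degree_lt (n := m + 1)
    (hQ.trans_lt (by exact_mod_cast m.lt_succ_self)), mul_zero, sub_zero]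

theorem neville_identity (x y : Fin (m + 2) → F) (hx : Function.Injective x)
    {P Q₀ Q₁ : F[X]} (hP : P.degree ≤ ↑(m + 1)) (hQ₀ : Q₀.degree ≤ m) (hQ₁ : Q₁.degree ≤ m)
    (hPy : ∀ j, P.eval (x j) = y j)
    (hQ₀y : ∀ j : Fin (m + 1), Q₀.eval (x j.castSucc) = y j.castSucc)
    (hQ₁y : ∀ j : Fin (m + 1), Q₁.eval (x j.succ) = y j.succ) :
    C (x (Fin.last _) - x 0) * P = (X - C (x 0)) * Q₁ - (X - C (x (Fin.last _))) * Q₀ := by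
  refine eq_of_degree_sub_lt_of_eval_index_eq (v := x) univ hx.injOn ?_ fun j _ => ?_
  · have hXQ : ∀ (a : F) (Q : F[X]), Q.degree ≤ m → ((X - C a) * Q).degree ≤ ↑(m + 1) := by
      intro a Q hQ
      simpa [add_comm] using degree_mul_le_of_le (degree_X_sub_C_le a) hQ
    have hCP : (C (x (Fin.last _) - x 0) * P).degree ≤ ↑(m + 1) := by
      simpa using degree_mul_le_of_le (degree_C_le (a := x (Fin.last _) - x 0)) hP
    refine (degree_sub_le_of_le hCP (degree_sub_le_of_le (hXQ _ _ hQ₁) (hXQ _ _ hQ₀))).trans_lt ?_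
    simp only [max_self, card_univ, Fintype.card_fin]
    exact_mod_cast Nat.lt_succ_self _
  · simp only [eval_mul, eval_C, eval_sub, eval_X, hPy]
    induction j using Fin.cases with
    | zero => rw [← Fin.castSucc_zero, hQ₀y]; ring
    | succ j =>
      rw [hQ₁y]
      induction j using Fin.lastCases with
      | last => rw [Fin.succ_last, sub_self]; ring
      | cast j => rw [← Fin.castSucc_succ, hQ₀y]; ring

end Interpolation

theorem divdiff_eq_coeff : ∀ (m : ℕ) (p : Fin (m + 1) → ℝ × ℝ),
    Function.Injective (fun j => (p j).1) → ∀ P : ℝ[X], P.degree ≤ m →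
    (∀ j, P.eval (p j).1 = (p j).2) → divdiff m p = P.coeff m
  | 0, p, _, P, hP, hPp => by
    rw [divdiff, ← hPp 0, eq_C_of_degree_le_zero hP, eval_C, coeff_C_zero]
  | m + 1, p, hx, P, hP, hPp => by
    set x := fun j => (p j).1
    obtain ⟨Q₀, hQ₀, hQ₀p⟩ := exists_degree_le_eval_eq (fun j => x j.castSucc)
      (fun j => (p j.castSucc).2) (hx.comp (Fin.castSucc_injective _))
    obtain ⟨Q₁, hQ₁, hQ₁p⟩ := exists_degree_le_eval_eq (fun j => x j.succ)
      (fun j => (p j.succ).2) (hx.comp (Fin.succ_injective _))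
    have hN := congrArg (coeff · (m + 1))
      (neville_identity x (fun j => (p j).2) hx hP hQ₀ hQ₁ hPp hQ₀p hQ₁p)
    rw [coeff_C_mul, coeff_sub, coeff_X_sub_C_mul_of_degree_le _ hQ₀,
      coeff_X_sub_C_mul_of_degree_le _ hQ₁] at hN
    have hx0 : x (Fin.last _) - x 0 ≠ 0 := sub_ne_zero.mpr (hx.ne (Fin.last_pos.ne'))
    rw [divdiff, divdiff_eq_coeff m _ (hx.comp (Fin.succ_injective _)) Q₁ hQ₁ hQ₁p,
      divdiff_eq_coeff m _ (hx.comp (Fin.castSucc_injective _)) Q₀ hQ₀ hQ₀p, ← hN,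
      mul_div_cancel_left₀ _ hx0]

theorem divdiff_eq_mul_inv_prod (k : ℕ) (p : Fin (k + 1) → ℝ × ℝ)
    (hx : Function.Injective fun j => (p j).1) (i : Fin (k + 1)) (f : ℝ[X])
    (hdeg : f.degree < k) (hf : ∀ j, j ≠ i → f.eval (p j).1 = (p j).2) :
    divdiff k p = ((p i).2 - f.eval (p i).1) *
      (∏ l ∈ univ.erase i, ((p i).1 - (p l).1))⁻¹ := by
  set x := fun j => (p j).1
  set d := (p i).2 - f.eval (x i)
  have hbasis : (Lagrange.basis univ x i).degree = k := by
    simpa using Lagrange.degree_basis hx.injOn (mem_univ i)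
  have hCbasis : (C d * Lagrange.basis univ x i).degree ≤ k := by
    simpa using degree_mul_le_of_le (degree_C_le (a := d)) hbasis.le
  have hP : (f + C d * Lagrange.basis univ x i).degree ≤ k :=
    (degree_add_le_of_le hdeg.le hCbasis).trans_eq (max_self _)
  have hPp : ∀ j, (f + C d * Lagrange.basis univ x i).eval (x j) = (p j).2 := by
    intro j
    rw [eval_add, eval_mul, eval_C]
    by_cases hj : j = i
    · rw [hj, Lagrange.eval_basis_self hx.injOn (mem_univ i)]
      ring
    · rw [Lagrange.eval_basis_of_ne (Ne.symm hj) (mem_univ j), hf j hj, mul_zero, add_zero]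
  have hcoeff : (Lagrange.basis univ x i).coeff k = (Lagrange.basis univ x i).leadingCoeff := by
    simp [leadingCoeff, Lagrange.natDegree_basis hx.injOn (mem_univ i)]
  rw [divdiff_eq_coeff k p hx _ hP hPp, coeff_add, coeff_eq_zero_of_degree_lt hdeg, zero_add,
    coeff_C_mul, hcoeff, Lagrange.leadingCoeff_basis hx.injOn (mem_univ i)]

theorem neg_one_pow_mul_prod_erase_sub_pos {R : Type*} [CommRing R] [LinearOrder R]
    [IsStrictOrderedRing R] {k : ℕ} (x : Fin (k + 1) → R) (hx : StrictMono x) (i : Fin (k + 1)) :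
    0 < (-1) ^ (k - i : ℕ) * ∏ l ∈ univ.erase i, (x i - x l) := by
  have hsplit : univ.erase i = Iio i ∪ Ioi i := by
    ext l
    simp
  have hcard : #(Ioi i) = k - i := by simp
  rw [hsplit, prod_union (disjoint_left.mpr fun l hl hl' => (mem_Iio.mp hl).asymm (mem_Ioi.mp hl')),
    mul_left_comm, ← hcard, ← prod_neg]
  refine mul_pos (prod_pos fun l hl => ?_) (prod_pos fun l hl => ?_)
  · exact sub_pos.mpr (hx (mem_Iio.mp hl))
  · exact neg_pos.mpr (sub_neg.mpr (hx (mem_Ioi.mp hl)))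

theorem Real.sign_eq_neg_one_pow_of_mul_pos {n : ℕ} {r : ℝ} (h : 0 < (-1) ^ n * r) :
    Real.sign r = (-1) ^ n := by
  rcases neg_one_pow_eq_or ℝ n with hn | hn <;> rw [hn] at h ⊢
  · exact Real.sign_of_pos (by linarith)
  · exact Real.sign_of_neg (by linarith)

-- `i` is 0-indexed: the paper's exponent `k - i` becomes `k - (i + 1) ≡ k + i + 1 (mod 2)`.
theorem stmt6_general (k : ℕ) (p : Fin (k + 1) → ℝ × ℝ)
    (hx : StrictMono fun i => (p i).1)
    (i : Fin (k + 1)) (f : Polynomial ℝ) (hdeg : f.degree < (k : WithBot ℕ))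
    (hf : ∀ j, j ≠ i → Polynomial.eval (p j).1 f = (p j).2) :
    ((p i).2 < Polynomial.eval (p i).1 f →
      Real.sign (divdiff k p) = (-1 : ℝ) ^ (k + (i : ℕ) + 1)) ∧
    (Polynomial.eval (p i).1 f < (p i).2 →
      Real.sign (divdiff k p) = (-1 : ℝ) ^ (k + (i : ℕ))) := by
  set W := ∏ l ∈ univ.erase i, ((p i).1 - (p l).1)
  have hW : 0 < (-1) ^ (k - i : ℕ) * W := neg_one_pow_mul_prod_erase_sub_pos _ hx i
  have hpow : (-1 : ℝ) ^ (k + i : ℕ) = (-1) ^ (k - i : ℕ) := by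
    rw [show k + (i : ℕ) = k - i + 2 * i by omega, pow_add, pow_mul]
    norm_num
  have hdivdiff : (-1) ^ (k + i : ℕ) * divdiff k p =
      ((p i).2 - f.eval (p i).1) * ((-1) ^ (k - i : ℕ) * W)⁻¹ := by
    rw [divdiff_eq_mul_inv_prod k p hx.injective i f hdeg hf, hpow, mul_inv, ← inv_pow,
      inv_neg_one]
    ring
  refine ⟨fun hlt => Real.sign_eq_neg_one_pow_of_mul_pos ?_,
    fun hlt => Real.sign_eq_neg_one_pow_of_mul_pos ?_⟩
  · rw [pow_succ, mul_neg_one, neg_mul, hdivdiff, ← neg_mul]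
    exact mul_pos (neg_pos.mpr (sub_neg.mpr hlt)) (inv_pos.mpr hW)
  · rw [hdivdiff]
    exact mul_pos (sub_pos.mpr hlt) (inv_pos.mpr hW)

/-- **Sign criterion** (Lemma 2.4): let `K = {p₀, …, p_k}` (0-indexed; `k+1` points,
`x₀ < ⋯ < x_k`) be in `k`-general position, fix an index `i`, and let `f` be the
polynomial of degree at most `k-1` through the `k` points of `K \ {pᵢ}`. Then
`sgn Δ_k(p₀, …, p_k) = (-1)^{k-(i+1)} = (-1)^{k+i+1}` if `pᵢ` lies below the graph of `f`,
and `sgn Δ_k(p₀, …, p_k) = (-1)^{k+1-(i+1)} = (-1)^{k+i}` if `pᵢ` lies above the graph.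
(Here `i` is 0-indexed, whereas the paper uses 1-indexing; the exponents agree mod 2.) -/
theorem stmt6 (k : ℕ) (hk : 1 ≤ k) (p : Fin (k + 1) → ℝ × ℝ)
    (hx : StrictMono fun i => (p i).1)
    (hgen : ∀ g : Polynomial ℝ, g.degree < (k : WithBot ℕ) →
      ∃ j, Polynomial.eval (p j).1 g ≠ (p j).2)
    (i : Fin (k + 1)) (f : Polynomial ℝ) (hdeg : f.degree < (k : WithBot ℕ))
    (hf : ∀ j, j ≠ i → Polynomial.eval (p j).1 f = (p j).2) :
    ((p i).2 < Polynomial.eval (p i).1 f →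
      Real.sign (divdiff k p) = (-1 : ℝ) ^ (k + (i : ℕ) + 1)) ∧
    (Polynomial.eval (p i).1 f < (p i).2 →
      Real.sign (divdiff k p) = (-1 : ℝ) ^ (k + (i : ℕ))) :=
  stmt6_general k p hx i f hdeg hf
end

section
/- Let k ≥ 1 and let p₁, …, p_{k+2} be points in ℝ² in k-general position, p_i = (x_i, y_i) with x₁ < ⋯ < x_{k+2}. If Δ_k(p₁, …, p_{k+1}) and Δ_k(p₂, …, p_{k+2}) have the same sign s ∈ {+1, −1}, then for every i ∈ {1, …, k+2}, the divided difference Δ_k of the (k+1)-tuple obtained from (p₁, …, p_{k+2}) by omitting p_i also has sign s. In other words, the 2-coloring of (k+1)-tuples of a set in k-general position by the sign of their k-th divided difference is transitive. -/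
/-!
Write `Δ(S)` for the divided difference over a node set `S`. Its symmetric (Lagrange) form
`Δ(S) = ∑_{j ∈ S} y_j / ∏_{l ≠ j} (x_j - x_l)` gives the exchange identity
`Δ(S ∖ a) - Δ(S ∖ b) = (x_b - x_a) Δ(S)`, and hence, for nodes `a, i, b`,
`(x_b - x_a) Δ(S ∖ i) = (x_b - x_i) Δ(S ∖ a) + (x_i - x_a) Δ(S ∖ b)`.
For `x_a ≤ x_i ≤ x_b` the divided difference omitting `i` is thus a positive multiple of a
nonnegative combination of the two omitting the extreme points, so it inherits their sign.
-/

open Finset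

noncomputable def lagrangeDivDiff {ι K : Type*} [DecidableEq ι] [Field K] (x y : ι → K)
    (S : Finset ι) : K :=
  ∑ j ∈ S, y j / ∏ l ∈ S.erase j, (x j - x l)

section LagrangeDivDiff

variable {ι K : Type*} [DecidableEq ι] [Field K] (x y : ι → K) {S : Finset ι}

lemma lagrangeDivDiff_erase (hx : Set.InjOn x S) {c : ι} (hc : c ∈ S) :
    lagrangeDivDiff x y (S.erase c) =
      ∑ j ∈ S, (x j - x c) * y j / ∏ l ∈ S.erase j, (x j - x l) := by
  rw [lagrangeDivDiff, eq_comm, ← sum_erase S (a := c)]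
  · refine sum_congr rfl fun j hj => ?_
    obtain ⟨hjc, hjS⟩ := mem_erase.1 hj
    have hcj : x j - x c ≠ 0 := sub_ne_zero.2 fun h => hjc (hx hjS hc h)
    rw [erase_right_comm, ← mul_prod_erase _ _ (mem_erase.2 ⟨hjc.symm, hc⟩),
      mul_div_mul_left _ _ hcj]
  · simp

lemma lagrangeDivDiff_erase_sub_erase (hx : Set.InjOn x S) {a b : ι} (ha : a ∈ S)
    (hb : b ∈ S) :
    lagrangeDivDiff x y (S.erase a) - lagrangeDivDiff x y (S.erase b) =
      (x b - x a) * lagrangeDivDiff x y S := by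
  rw [lagrangeDivDiff_erase x y hx ha, lagrangeDivDiff_erase x y hx hb, lagrangeDivDiff, mul_sum,
    ← sum_sub_distrib]
  refine sum_congr rfl fun j _ => ?_
  rw [div_sub_div_same, ← mul_div_assoc]
  ring

lemma lagrangeDivDiff_erase_interpolate (hx : Set.InjOn x S) {a b i : ι} (ha : a ∈ S)
    (hb : b ∈ S) (hi : i ∈ S) :
    (x b - x a) * lagrangeDivDiff x y (S.erase i) =
      (x b - x i) * lagrangeDivDiff x y (S.erase a) +
        (x i - x a) * lagrangeDivDiff x y (S.erase b) := by
  linear_combination (x i - x a) * lagrangeDivDiff_erase_sub_erase x y hx ha hb -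
    (x b - x a) * lagrangeDivDiff_erase_sub_erase x y hx ha hi

end LagrangeDivDiff

lemma lagrangeDivDiff_comp_succAbove {K : Type*} [Field K] {n : ℕ} (x y : Fin (n + 1) → K)
    (i : Fin (n + 1)) :
    lagrangeDivDiff (fun j => x (i.succAbove j)) (fun j => y (i.succAbove j)) univ =
      lagrangeDivDiff x y (univ.erase i) := by
  have he : Set.InjOn i.succAbove (univ : Finset (Fin n)) := Fin.succAbove_right_injective.injOn
  rw [← compl_singleton, ← Fin.image_succAbove_univ, lagrangeDivDiff, lagrangeDivDiff,
    sum_image he]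
  refine sum_congr rfl fun j _ => ?_
  rw [← image_erase Fin.succAbove_right_injective, prod_image (he.mono (by simp))]

lemma divdiff_eq_lagrangeDivDiff :
    ∀ (m : ℕ) (p : Fin (m + 1) → ℝ × ℝ), Function.Injective (fun i => (p i).1) →
      divdiff m p = lagrangeDivDiff (fun i => (p i).1) (fun i => (p i).2) univ
  | 0, p, _ => by simp [divdiff, lagrangeDivDiff]
  | m + 1, p, hx => by
    have hlast : (p (Fin.last (m + 1))).1 - (p 0).1 ≠ 0 :=
      sub_ne_zero.2 fun h => Fin.last_pos.ne' (hx h)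
    rw [divdiff, divdiff_eq_lagrangeDivDiff m _ (hx.comp (Fin.succ_injective _)),
      divdiff_eq_lagrangeDivDiff m _ (hx.comp (Fin.castSucc_injective _)),
      ← Fin.succAbove_zero, ← Fin.succAbove_last,
      lagrangeDivDiff_comp_succAbove (fun i => (p i).1) (fun i => (p i).2) 0,
      lagrangeDivDiff_comp_succAbove (fun i => (p i).1) (fun i => (p i).2) (Fin.last _),
      lagrangeDivDiff_erase_sub_erase _ _ hx.injOn (mem_univ _) (mem_univ _)]
    field_simp

lemma divdiff_comp_succAbove {n : ℕ} (p : Fin (n + 2) → ℝ × ℝ)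
    (hx : Function.Injective (fun i => (p i).1)) (i : Fin (n + 2)) :
    divdiff n (fun j => p (i.succAbove j)) =
      lagrangeDivDiff (fun i => (p i).1) (fun i => (p i).2) (univ.erase i) := by
  rw [divdiff_eq_lagrangeDivDiff n _ (hx.comp Fin.succAbove_right_injective)]
  exact lagrangeDivDiff_comp_succAbove (fun i => (p i).1) (fun i => (p i).2) i

lemma Real.sign_eq_iff_pos_mul {r s : ℝ} (hs : s = 1 ∨ s = -1) :
    Real.sign r = s ↔ 0 < s * r := by
  rcases lt_trichotomy r 0 with hr | rfl | hr
  · rcases hs with rfl | rfl <;> norm_num [Real.sign_of_neg hr, hr, hr.not_gt]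
  · rcases hs with rfl | rfl <;> simp
  · rcases hs with rfl | rfl <;> norm_num [Real.sign_of_pos hr, hr, hr.not_gt]

theorem stmt7_general (k : ℕ) (p : Fin (k + 2) → ℝ × ℝ)
    (hx : StrictMono fun i => (p i).1)
    (s : ℝ) (hs : s = 1 ∨ s = -1)
    (h1 : Real.sign (divdiff k (fun i : Fin (k + 1) => p i.castSucc)) = s)
    (h2 : Real.sign (divdiff k (fun i : Fin (k + 1) => p i.succ)) = s) :
    ∀ i : Fin (k + 2), Real.sign (divdiff k (fun j : Fin (k + 1) => p (i.succAbove j))) = s := by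
  intro i
  rw [← Fin.succAbove_last] at h1
  rw [← Fin.succAbove_zero] at h2
  rw [divdiff_comp_succAbove p hx.injective, Real.sign_eq_iff_pos_mul hs] at h1 h2 ⊢
  set x := fun j => (p j).1
  have hinterp := lagrangeDivDiff_erase_interpolate x (fun j => (p j).2) hx.injective.injOn
    (mem_univ 0) (mem_univ (Fin.last (k + 1))) (mem_univ i)
  have hspan : 0 < x (Fin.last (k + 1)) - x 0 := sub_pos.2 (hx Fin.last_pos)
  have hleft : 0 ≤ x i - x 0 := sub_nonneg.2 (hx.monotone (Fin.zero_le i))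
  have hright : 0 ≤ x (Fin.last (k + 1)) - x i := sub_nonneg.2 (hx.monotone (Fin.le_last i))
  refine pos_of_mul_pos_right (a := x (Fin.last (k + 1)) - x 0) ?_ hspan.le
  rw [mul_left_comm, hinterp, mul_add, mul_left_comm, mul_left_comm s]
  rcases hright.lt_or_eq with hright | hright
  · exact add_pos_of_pos_of_nonneg (mul_pos hright h2) (mul_nonneg hleft h1.le)
  · rw [← hright, zero_mul, zero_add]
    exact mul_pos (by linarith) h1

/-- **Transitivity of the sign coloring** (Lemma 2.5): let `p₁, …, p_{k+2}` be points in
`k`-general position with `x₁ < ⋯ < x_{k+2}`. If the divided differences of the first `k+1`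
and of the last `k+1` points have the same sign `s ∈ {+1, -1}`, then the divided difference of
every `(k+1)`-subtuple (omitting any one point `pᵢ`) also has sign `s`. -/
theorem stmt7 (k : ℕ) (hk : 1 ≤ k) (p : Fin (k + 2) → ℝ × ℝ)
    (hx : StrictMono fun i => (p i).1)
    (hgen : ∀ g : Polynomial ℝ, g.degree < (k : WithBot ℕ) →
      ∀ T : Finset (Fin (k + 2)), (∀ j ∈ T, Polynomial.eval (p j).1 g = (p j).2) →
        T.card ≤ k)
    (s : ℝ) (hs : s = 1 ∨ s = -1)
    (h1 : Real.sign (divdiff k (fun i : Fin (k + 1) => p i.castSucc)) = s)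
    (h2 : Real.sign (divdiff k (fun i : Fin (k + 1) => p i.succ)) = s) :
    ∀ i : Fin (k + 2), Real.sign (divdiff k (fun j : Fin (k + 1) => p (i.succAbove j))) = s :=
  stmt7_general k p hx s hs h1 h2
end

section
/- For every n ≥ 1, every transitive 2-coloring of the 3-element subsets of {1, 2, …, 4ⁿ} admits an n-element homogeneous subset, i.e., an n-element subset all of whose 3-element subsets receive the same color. -/
/-!
Call a sequence `x₁ < ⋯ < x_k` (or `x₁ > ⋯ > x_k`) a tight path of colour `χ` if every three
consecutive entries span a triple of colour `χ`. For a transitive colouring every tight path is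
homogeneous: if the triples avoiding the minimum and those avoiding the maximum of a set all have
colour `χ`, then for a triple `{min, m, max}` pick any fourth point `w`; transitivity on
`{min, m, w, max}` carries the common colour of its two extreme triples over to `{min, m, max}`.

Tight paths satisfy an Erdős–Szekeres type recursion: more than `C(r + s, r)` points contain a
descending red (`true`) tight path on `r + 2` points or an ascending blue (`false`) one on `s + 2`
points. Split the points according to whether they are the top of a red path on `r + 1` points;
in the second part a blue path `v < w < ⋯` and a red path `v > u > ⋯` meet at `v`, and the colour
of `{u, v, w}` decides which of the two extends. Since `C(2n, n) < 4ⁿ`, taking `r = s = n` gives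
the theorem.
-/

/-- A 2-coloring `c` of the `ℓ`-element subsets of the linearly ordered set `Fin N`
is *transitive* if for all `i₁ < ⋯ < i_{ℓ+1}` (i.e. each `(ℓ+1)`-set `T`), whenever the first
`ℓ` elements (`T` minus its maximum) and the last `ℓ` elements (`T` minus its minimum)
receive the same color, then all `ℓ`-element subsets of `T` receive this same color. -/
def IsTransitive {N : ℕ} (ℓ : ℕ) (c : Finset (Fin N) → Bool) : Prop :=
  ∀ T : Finset (Fin N), T.card = ℓ + 1 → ∀ h : T.Nonempty,
    c (T.erase (T.max' h)) = c (T.erase (T.min' h)) →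
    ∀ a ∈ T, c (T.erase a) = c (T.erase (T.min' h))

/-- A set `S` is *homogeneous* for a coloring `c` of `ℓ`-element subsets
if all `ℓ`-element subsets of `S` receive the same color. -/
def HasHomog {N : ℕ} (ℓ n : ℕ) (c : Finset (Fin N) → Bool) : Prop :=
  ∃ S : Finset (Fin N), S.card = n ∧
    ∃ col : Bool, ∀ T ⊆ S, T.card = ℓ → c T = col

/-- `trrams ℓ n` : the Ramsey number for transitive colorings, i.e. the least `N` such that
every transitive 2-coloring of the `ℓ`-element subsets of `{1, …, N}` admits an `n`-element
homogeneous subset. -/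
noncomputable def trrams (ℓ n : ℕ) : ℕ :=
  sInf {N | ∀ c : Finset (Fin N) → Bool, IsTransitive ℓ c → HasHomog ℓ n c}

open Finset

def IsHomogeneous {α : Type*} (c : Finset α → Bool) (col : Bool) (S : Finset α) : Prop :=
  ∀ T ⊆ S, T.card = 3 → c T = col

theorem IsHomogeneous.mono {α : Type*} {c : Finset α → Bool} {col : Bool} {S T : Finset α}
    (hS : IsHomogeneous c col S) (hTS : T ⊆ S) : IsHomogeneous c col T :=
  fun U hU => hS U (hU.trans hTS)

section TightPath

variable {α : Type*} [DecidableEq α] {c : Finset α → Bool} {col : Bool}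

def IsTightPath (c : Finset α → Bool) (col : Bool) (l : List α) : Prop :=
  ∀ x y z, [x, y, z] <:+: l → c {x, y, z} = col

theorem IsTightPath.of_infix {l₁ l₂ : List α} (h : IsTightPath c col l₂) (h₁₂ : l₁ <:+: l₂) :
    IsTightPath c col l₁ :=
  fun x y z hxyz => h x y z (hxyz.trans h₁₂)

theorem isTightPath_of_length_lt_three {l : List α} (hl : l.length < 3) : IsTightPath c col l :=
  fun _ _ _ hxyz => absurd hxyz.length_le (Nat.not_le.2 hl)

theorem IsTightPath.cons {u x y : α} {l : List α} (h : IsTightPath c col (x :: y :: l))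
    (hu : c {u, x, y} = col) : IsTightPath c col (u :: x :: y :: l) := by
  intro a b d habd
  rcases List.infix_cons_iff.1 habd with hpre | hinf
  · obtain ⟨rfl, rfl, rfl, -⟩ := by simpa only [List.cons_prefix_cons] using hpre
    exact hu
  · exact h a b d hinf

theorem IsTightPath.reverse {l : List α} (h : IsTightPath c col l) :
    IsTightPath c col l.reverse := by
  intro x y z hxyz
  have hzyx : c {z, y, x} = col := h z y x (List.reverse_infix.1 (by simpa using hxyz))
  rwa [show ({z, y, x} : Finset α) = {x, y, z} by grind] at hzyx

end TightPath

section Transitive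

variable {N : ℕ} {c : Finset (Fin N) → Bool} {col : Bool}

theorem IsHomogeneous.of_erase_min_of_erase_max (hc : IsTransitive 3 c) {S : Finset (Fin N)}
    {a z : Fin N} (ha : ∀ x ∈ S, a ≤ x) (hz : ∀ x ∈ S, x ≤ z)
    (hS : 4 ≤ S.card) (hSa : IsHomogeneous c col (S.erase a))
    (hSz : IsHomogeneous c col (S.erase z)) : IsHomogeneous c col S := by
  intro T hTS hT
  by_cases haT : a ∈ T; swap
  · exact hSa T (subset_erase.2 ⟨hTS, haT⟩) hT
  by_cases hzT : z ∈ T; swap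
  · exact hSz T (subset_erase.2 ⟨hTS, hzT⟩) hT
  obtain ⟨w, hwS, hwT⟩ := exists_mem_notMem_of_card_lt_card (show T.card < S.card by omega)
  set Q := insert w T with hQ_def
  have hQS : Q ⊆ S := insert_subset hwS hTS
  have hQ : Q.card = 4 := by rw [card_insert_of_notMem hwT, hT]
  have hQne : Q.Nonempty := insert_nonempty w T
  have hmin : Q.min' hQne = a :=
    (Q.min'_eq_iff hQne a).2 ⟨mem_insert_of_mem haT, fun x hx => ha x (hQS hx)⟩
  have hmax : Q.max' hQne = z :=
    (Q.max'_eq_iff hQne z).2 ⟨mem_insert_of_mem hzT, fun x hx => hz x (hQS hx)⟩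
  have hQa : c (Q.erase a) = col :=
    hSa _ (erase_subset_erase a hQS) (by rw [card_erase_of_mem (mem_insert_of_mem haT), hQ])
  have hQz : c (Q.erase z) = col :=
    hSz _ (erase_subset_erase z hQS) (by rw [card_erase_of_mem (mem_insert_of_mem hzT), hQ])
  have hQw := hc Q hQ hQne (by rw [hmax, hmin, hQa, hQz]) w (mem_insert_self w T)
  rwa [hmin, hQa, hQ_def, erase_insert hwT] at hQw

theorem IsTightPath.isHomogeneous (hc : IsTransitive 3 c) {l : List (Fin N)}
    (hl : l.Pairwise (· < ·)) (hp : IsTightPath c col l) : IsHomogeneous c col l.toFinset := by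
  induction hlen : l.length using Nat.strong_induction_on generalizing l with
  | _ k ih =>
  have hcard : l.toFinset.card = k := hlen ▸ List.toFinset_card_of_nodup hl.nodup
  rcases lt_or_ge k 4 with hk | hk
  · intro T hT hT3
    obtain rfl : T = l.toFinset := eq_of_subset_of_card_le hT (by omega)
    obtain ⟨x, y, z, rfl⟩ := List.length_eq_three.1 (show l.length = 3 by omega)
    simpa using hp x y z (List.infix_refl _)
  obtain ⟨a, l, rfl⟩ := List.exists_cons_of_length_eq_add_one (show l.length = k - 1 + 1 by omega)
  obtain ⟨m, z, rfl⟩ := (List.eq_nil_or_concat' l).resolve_left (by rintro rfl; grind)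
  have hlen' : (m ++ [z]).length < k ∧ (a :: m).length < k := by grind
  have h_tail : IsHomogeneous c col (m ++ [z]).toFinset :=
    ih _ hlen'.1 (List.pairwise_cons.1 hl).2 (hp.of_infix (List.suffix_cons a _).isInfix) rfl
  have h_init : IsHomogeneous c col (a :: m).toFinset :=
    ih _ hlen'.2 (hl.sublist (List.prefix_append _ _).sublist)
      (hp.of_infix (List.prefix_append _ _).isInfix) rfl
  refine .of_erase_min_of_erase_max hc (a := a) (z := z) ?_ ?_ (by omega) ?_ ?_
  · intro x hx
    rcases List.mem_cons.1 (List.mem_toFinset.1 hx) with rfl | hx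
    · exact le_rfl
    · exact ((List.pairwise_cons.1 hl).1 x hx).le
  · intro x hx
    rcases List.mem_append.1 (show x ∈ (a :: m) ++ [z] from List.mem_toFinset.1 hx) with hx | hx
    · exact ((List.pairwise_append.1 (show ((a :: m) ++ [z]).Pairwise (· < ·) from hl)).2.2
        x hx z (List.mem_singleton_self z)).le
    · exact (List.mem_singleton.1 hx).le
  · exact h_tail.mono fun x hx => by obtain ⟨hxa, hx⟩ := mem_erase.1 hx; simpa [hxa] using hx
  · exact h_init.mono fun x hx => by obtain ⟨hxz, hx⟩ := mem_erase.1 hx; simpa [hxz] using hx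

end Transitive

section Ramsey

variable {α : Type*} [LinearOrder α] {c : Finset α → Bool}

theorem IsTightPath.cons_or_cons {u v w : α} {q l : List α}
    (hred : (v :: u :: q).Pairwise (· > ·)) (hred' : IsTightPath c true (v :: u :: q))
    (hblue : (v :: w :: l).Pairwise (· < ·)) (hblue' : IsTightPath c false (v :: w :: l)) :
    (w :: v :: u :: q).Pairwise (· > ·) ∧ IsTightPath c true (w :: v :: u :: q) ∨
      (u :: v :: w :: l).Pairwise (· < ·) ∧ IsTightPath c false (u :: v :: w :: l) := by
  have hvw : v < w := List.rel_of_pairwise_cons hblue List.mem_cons_self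
  have huv : u < v := List.rel_of_pairwise_cons hred List.mem_cons_self
  cases h : c {u, v, w}
  · exact .inr ⟨hblue.cons_cons_of_trans huv, hblue'.cons h⟩
  · refine .inl ⟨hred.cons_cons_of_trans hvw, hred'.cons ?_⟩
    rwa [show ({w, v, u} : Finset α) = {u, v, w} by grind]

theorem exists_tightPath_of_choose_lt (c : Finset α → Bool) (r s : ℕ) (V : Finset α)
    (hV : (r + s).choose r < V.card) :
    (∃ l : List α, l.Pairwise (· > ·) ∧ IsTightPath c true l ∧ l.length = r + 2 ∧ ∀ x ∈ l, x ∈ V) ∨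
      ∃ l : List α, l.Pairwise (· < ·) ∧ IsTightPath c false l ∧ l.length = s + 2 ∧
        ∀ x ∈ l, x ∈ V := by
  induction r generalizing s V with
  | zero =>
    have hV : 1 < V.card := by simpa using hV
    have hne : V.Nonempty := card_pos.1 (by omega)
    refine .inl ⟨[V.max' hne, V.min' hne], ?_, isTightPath_of_length_lt_three (by simp), rfl, ?_⟩
    · simpa using min'_lt_max'_of_card V hV
    · simp [max'_mem, min'_mem]
  | succ r ihr =>
  induction s generalizing V with
  | zero =>
    have hV : 1 < V.card := by simpa using hV
    have hne : V.Nonempty := card_pos.1 (by omega)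
    refine .inr ⟨[V.min' hne, V.max' hne], ?_, isTightPath_of_length_lt_three (by simp), rfl, ?_⟩
    · simpa using min'_lt_max'_of_card V hV
    · simp [max'_mem, min'_mem]
  | succ s ihs =>
  classical
  let W := V.filter fun v => ∃ q : List α, (v :: q).Pairwise (· > ·) ∧
    IsTightPath c true (v :: q) ∧ (v :: q).length = r + 2 ∧ ∀ x ∈ v :: q, x ∈ V
  have hWV : W ⊆ V := filter_subset _ _
  have hsplit : (r + (s + 1)).choose r < (V \ W).card ∨ (r + 1 + s).choose (r + 1) < W.card := by
    have hpascal : (r + 1 + (s + 1)).choose (r + 1) =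
        (r + (s + 1)).choose r + (r + 1 + s).choose (r + 1) := by
      rw [show r + 1 + (s + 1) = r + (s + 1) + 1 by omega, Nat.choose_succ_succ',
        show r + (s + 1) = r + 1 + s by omega]
    have := card_sdiff_add_card_eq_card hWV
    omega
  rcases hsplit with hsplit | hsplit
  · rcases ihr (s + 1) (V \ W) hsplit with ⟨l, hl, hlc, hlen, hlV⟩ | ⟨l, hl, hlc, hlen, hlV⟩
    · obtain ⟨v, q, rfl⟩ := List.exists_cons_of_length_eq_add_one hlen
      have hv := mem_sdiff.1 (hlV v List.mem_cons_self)
      exact absurd (mem_filter.2 ⟨hv.1, q, hl, hlc, hlen, fun x hx => (mem_sdiff.1 (hlV x hx)).1⟩)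
        hv.2
    · exact .inr ⟨l, hl, hlc, hlen, fun x hx => (mem_sdiff.1 (hlV x hx)).1⟩
  · rcases ihs W hsplit with ⟨l, hl, hlc, hlen, hlV⟩ | ⟨l, hl, hlc, hlen, hlV⟩
    · exact .inl ⟨l, hl, hlc, hlen, fun x hx => hWV (hlV x hx)⟩
    obtain ⟨v, w, l, rfl⟩ : ∃ v w l', l = v :: w :: l' := by
      obtain ⟨v, l, rfl⟩ := List.exists_cons_of_length_eq_add_one hlen
      obtain ⟨w, l, rfl⟩ := List.exists_cons_of_length_eq_add_one (by simpa using hlen)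
      exact ⟨v, w, l, rfl⟩
    obtain ⟨-, q, hq, hqc, hqlen, hqV⟩ := mem_filter.1 (hlV v List.mem_cons_self)
    obtain ⟨u, q, rfl⟩ := List.exists_cons_of_length_eq_add_one (by simpa using hqlen)
    rcases IsTightPath.cons_or_cons hq hqc hl hlc with ⟨h, hc⟩ | ⟨h, hc⟩
    · exact .inl ⟨_, h, hc, by simpa using hqlen,
        List.forall_mem_cons.2 ⟨hWV (hlV w (by simp)), hqV⟩⟩
    · exact .inr ⟨_, h, hc, by simpa using hlen,
        List.forall_mem_cons.2 ⟨hqV u (by simp), fun x hx => hWV (hlV x hx)⟩⟩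

end Ramsey

theorem exists_isHomogeneous_of_choose_lt {N : ℕ} {c : Finset (Fin N) → Bool}
    (hc : IsTransitive 3 c) {r s : ℕ} (hN : (r + s).choose r < N) :
    (∃ S : Finset (Fin N), S.card = r + 2 ∧ IsHomogeneous c true S) ∨
      ∃ S : Finset (Fin N), S.card = s + 2 ∧ IsHomogeneous c false S := by
  rcases exists_tightPath_of_choose_lt c r s univ (by simpa using hN) with
    ⟨l, hl, hlc, hlen, -⟩ | ⟨l, hl, hlc, hlen, -⟩
  · refine .inl ⟨l.reverse.toFinset, ?_, hlc.reverse.isHomogeneous hc (List.pairwise_reverse.2 hl)⟩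
    rw [List.toFinset_reverse, List.toFinset_card_of_nodup hl.nodup, hlen]
  · exact .inr ⟨l.toFinset, by rw [List.toFinset_card_of_nodup hl.nodup, hlen],
      hlc.isHomogeneous hc hl⟩

/-- **Base case of Theorem 1.4**: `trrams₃(n) ≤ 4ⁿ`. For every `n ≥ 1`, every transitive
2-coloring of the 3-element subsets of `{1, …, 4ⁿ}` admits an `n`-element homogeneous subset. -/
theorem stmt8 (n : ℕ) (hn : 1 ≤ n) (c : Finset (Fin (4 ^ n)) → Bool)
    (hc : IsTransitive 3 c) : HasHomog 3 n c := by
  have hN : (n + n).choose n < 4 ^ n := by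
    rw [← two_mul, ← Nat.centralBinom_eq_two_mul_choose]
    exact Nat.centralBinom_lt_four_pow (by omega)
  obtain ⟨col, S, hS, hScard⟩ : ∃ col S, IsHomogeneous c col S ∧ S.card = n + 2 := by
    rcases exists_isHomogeneous_of_choose_lt hc hN with ⟨S, hS, h⟩ | ⟨S, hS, h⟩
    exacts [⟨_, S, h, hS⟩, ⟨_, S, h, hS⟩]
  obtain ⟨T, hTS, hT⟩ := exists_subset_card_eq (show n ≤ S.card by omega)
  exact ⟨T, hT, col, hS.mono hTS⟩
end

section
/- Let k ≥ 3 and n ≥ 1, and let M be a positive integer such that every transitive 2-coloring of the k-element subsets of {1, …, M} admits an n-element homogeneous subset. Then every transitive 2-coloring of the (k+1)-element subsets of {1, …, N}, where N = 2^{M^k}, admits an n-element homogeneous subset. -/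
/-!
Stepping up in the manner of Erdős–Rado. Choose `x₁ < x₂ < ⋯` greedily, each the least
survivor, and keep as survivors the largest class of later points `y` that agree on the color of
`S ∪ {y}` for every `k`-set `S` of chosen points through the newest one. The survivors shrink by
a factor at most `2 ^ M ^ (k - 1)` per step, so `2 ^ M ^ k` points yield `M` chosen points and a
survivor `t` above them. On the chosen points the color of a `(k + 1)`-set then depends only on
the set minus its maximum, so `S ↦ c (S ∪ {t})` is a transitive coloring of `k`-sets whose
homogeneous sets are homogeneous for `c`.
-/

open Finset

section EndHomogeneous

variable {α : Type*} [LinearOrder α]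

def IsEndHomogeneous (c : Finset α → Bool) (k : ℕ) (X B : Finset α) : Prop :=
  ∀ S ⊆ X, #S = k → ∀ y ∈ B, ∀ z ∈ B, (∀ s ∈ S, s < y) → (∀ s ∈ S, s < z) →
    c (insert y S) = c (insert z S)

variable {c : Finset α → Bool} {k : ℕ}

theorem IsEndHomogeneous.mono {X B B' : Finset α} (h : IsEndHomogeneous c k X B)
    (hB : B' ⊆ B) : IsEndHomogeneous c k X B' :=
  fun S hS hSk y hy z hz => h S hS hSk y (hB hy) z (hB hz)

theorem isEndHomogeneous_empty (hk : k ≠ 0) (B : Finset α) : IsEndHomogeneous c k ∅ B := by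
  intro S hS hSk
  rw [subset_empty.1 hS, card_empty] at hSk
  exact absurd hSk.symm hk

theorem IsEndHomogeneous.exists_insert {m : ℕ} {X A : Finset α}
    (hXA : ∀ x ∈ X, ∀ a ∈ A, x < a) (h : IsEndHomogeneous c k X (X ∪ A))
    (hA : 2 ^ (#X).choose (k - 1) * m < #A) :
    ∃ x ∈ A, ∃ F ⊆ A, m ≤ #F ∧ (∀ y ∈ F, x < y) ∧
      IsEndHomogeneous c k (insert x X) (insert x X ∪ F) := by
  classical
  have hAne : A.Nonempty := card_pos.1 (by omega)
  set x := A.min' hAne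
  have hxA : x ∈ A := min'_mem A hAne
  -- survivors with equal trace color every `k`-set through `x` alike
  let trace : α → Finset (Finset α) := fun y =>
    {T ∈ X.powersetCard (k - 1) | c (insert y (insert x T))}
  obtain ⟨v, -, hv⟩ := exists_le_card_fiber_of_mul_le_card_of_maps_to
    (s := A.erase x) (f := trace) (n := m) (fun _ _ => mem_powerset.2 (filter_subset _ _))
    ⟨∅, empty_mem_powerset _⟩
    (by rw [card_powerset, card_powersetCard, card_erase_of_mem hxA]; omega)
  set F := {y ∈ A.erase x | trace y = v}
  have hFA : F ⊆ A := (filter_subset _ _).trans (erase_subset _ _)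
  have hxF : ∀ y ∈ F, x < y := fun y hy =>
    have ⟨hyx, hyA⟩ := mem_erase.1 (mem_filter.1 hy).1
    lt_of_le_of_ne (min'_le A y hyA) (Ne.symm hyx)
  refine ⟨x, hxA, F, hFA, hv, hxF, fun S hS hSk y hy z hz hSy hSz => ?_⟩
  by_cases hxS : x ∈ S
  · have hT : S.erase x ∈ X.powersetCard (k - 1) := by
      refine mem_powersetCard.2 ⟨fun s hs => ?_, by rw [card_erase_of_mem hxS, hSk]⟩
      exact (mem_insert.1 (hS (mem_of_mem_erase hs))).resolve_left (ne_of_mem_erase hs)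
    have hcolor : ∀ w ∈ insert x X ∪ F, x < w → (c (insert w S) = true ↔ S.erase x ∈ v) := by
      intro w hw hxw
      have hwF : w ∈ F := by
        rcases mem_union.1 hw with hw | hw
        · rcases mem_insert.1 hw with hwx | hwX
          · exact absurd (hwx ▸ hxw) (lt_irrefl x)
          · exact absurd (hXA w hwX x hxA) hxw.not_gt
        · exact hw
      rw [← (mem_filter.1 hwF).2]
      simp only [trace, mem_filter, hT, true_and, insert_erase hxS]
    exact Bool.eq_iff_iff.2 ((hcolor y hy (hSy x hxS)).trans (hcolor z hz (hSz x hxS)).symm)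
  · have hSX : S ⊆ X := fun s hs =>
      (mem_insert.1 (hS hs)).resolve_left (ne_of_mem_of_not_mem hs hxS)
    have hsub : insert x X ∪ F ⊆ X ∪ A := by
      rw [insert_union]
      exact insert_subset (mem_union_right X hxA) (union_subset_union_right hFA)
    exact h S hSX hSk y (hsub hy) z (hsub hz) hSy hSz

theorem exists_isEndHomogeneous_of_le (hk : 2 ≤ k) (A₀ : Finset α) {M : ℕ}
    (hA₀ : 2 ^ M ^ k ≤ #A₀) {i : ℕ} (hi : i ≤ M) :
    ∃ X A : Finset α, #X = i ∧ (∀ x ∈ X, ∀ a ∈ A, x < a) ∧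
      IsEndHomogeneous c k X (X ∪ A) ∧ 2 ^ ((M - i) * M ^ (k - 1)) ≤ #A := by
  induction i with
  | zero =>
    refine ⟨∅, A₀, rfl, by simp, isEndHomogeneous_empty (by omega) _, ?_⟩
    rwa [Nat.sub_zero, ← pow_succ', Nat.sub_add_cancel (by omega)]
  | succ i ih =>
    obtain ⟨X, A, hX, hXA, hEH, hA⟩ := ih (by omega)
    have hchoose : (#X).choose (k - 1) < M ^ (k - 1) :=
      (Nat.choose_le_pow _ _).trans_lt (Nat.pow_lt_pow_left (by omega) (by omega))
    have hcount : 2 ^ (#X).choose (k - 1) * 2 ^ ((M - (i + 1)) * M ^ (k - 1)) < #A := by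
      refine lt_of_lt_of_le ?_ hA
      rw [← pow_add, show M - i = M - (i + 1) + 1 by omega, add_one_mul]
      exact Nat.pow_lt_pow_right (by norm_num) (by omega)
    obtain ⟨x, hxA, F, hFA, hF, hxF, hEH'⟩ := hEH.exists_insert hXA hcount
    have hxX : x ∉ X := fun hx => lt_irrefl x (hXA x hx x hxA)
    refine ⟨insert x X, F, by rw [card_insert_of_notMem hxX, hX], ?_, hEH', hF⟩
    intro u hu y hy
    rcases mem_insert.1 hu with rfl | huX
    · exact hxF y hy
    · exact hXA u huX y (hFA hy)

theorem exists_isEndHomogeneous (c : Finset α → Bool) (hk : 2 ≤ k) (A₀ : Finset α) {M : ℕ}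
    (hA₀ : 2 ^ M ^ k ≤ #A₀) :
    ∃ X : Finset α, #X = M ∧ ∃ t, (∀ x ∈ X, x < t) ∧ IsEndHomogeneous c k X (insert t X) := by
  obtain ⟨X, A, hX, hXA, hEH, hA⟩ := exists_isEndHomogeneous_of_le hk A₀ hA₀ le_rfl
  rw [Nat.sub_self, zero_mul, pow_zero, Nat.one_le_iff_ne_zero, card_ne_zero] at hA
  obtain ⟨t, ht⟩ := hA
  exact ⟨X, hX, t, fun x hx => hXA x hx t ht,
    hEH.mono (insert_subset (mem_union_right X ht) subset_union_left)⟩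

end EndHomogeneous

section Pinned

variable {k M N : ℕ}

def pinnedColoring (c : Finset (Fin N) → Bool) (e : Fin M ↪o Fin N) (t : Fin N) :
    Finset (Fin M) → Bool :=
  fun S => c (insert t (S.image e))

variable {c : Finset (Fin N) → Bool} {e : Fin M ↪o Fin N} {X : Finset (Fin N)} {t : Fin N}

theorem color_image_eq_pinnedColoring (he : ∀ a, e a ∈ X) (hXt : ∀ x ∈ X, x < t)
    (hEH : IsEndHomogeneous c k X (insert t X)) {U : Finset (Fin M)} (hU : #U = k + 1)
    (hne : U.Nonempty) : c (U.image e) = pinnedColoring c e t (U.erase (U.max' hne)) := by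
  have hmax := max'_mem U hne
  set S := (U.erase (U.max' hne)).image e
  have hSX : S ⊆ X := fun s hs => by
    obtain ⟨a, -, rfl⟩ := mem_image.1 hs
    exact he a
  have hSk : #S = k := by
    rw [card_image_of_injective _ e.injective, card_erase_of_mem hmax, hU, Nat.add_sub_cancel]
  have hSmax : ∀ s ∈ S, s < e (U.max' hne) := fun s hs => by
    obtain ⟨a, ha, rfl⟩ := mem_image.1 hs
    exact e.strictMono (lt_max'_of_mem_erase_max' U hne ha)
  have hUS : U.image e = insert (e (U.max' hne)) S := by rw [← image_insert, insert_erase hmax]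
  rw [hUS]
  exact hEH S hSX hSk _ (mem_insert_of_mem (he _)) t (mem_insert_self t X) hSmax
    (fun s hs => hXt s (hSX hs))

theorem isTransitive_pinnedColoring (he : ∀ a, e a ∈ X) (hXt : ∀ x ∈ X, x < t)
    (hEH : IsEndHomogeneous c k X (insert t X)) (hc : IsTransitive (k + 1) c) :
    IsTransitive k (pinnedColoring c e t) := by
  intro U hU hne hmaxmin a ha
  have het : ∀ b, e b < t := fun b => hXt _ (he b)
  set W := insert t (U.image e)
  have htU : t ∉ U.image e := fun h => by
    obtain ⟨b, -, hb⟩ := mem_image.1 h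
    exact (het b).ne hb
  have hW : #W = k + 1 + 1 := by
    rw [card_insert_of_notMem htU, card_image_of_injective _ e.injective, hU]
  have hWne : W.Nonempty := insert_nonempty t _
  have hUe : (U.image e).Nonempty := hne.image e
  have hWmax : W.max' hWne = t := by
    rw [max'_insert t _ hUe, max'_image e.monotone, max_eq_left (het _).le]
  have hWmin : W.min' hWne = e (U.min' hne) := by
    rw [min'_insert t _ hUe, min'_image e.monotone, min_eq_right (het _).le]
  have herase : ∀ b ∈ U, c (W.erase (e b)) = pinnedColoring c e t (U.erase b) := fun b _ => by
    rw [erase_insert_of_ne (het b).ne', ← image_erase e.injective]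
    rfl
  rw [← herase a ha, ← herase _ (min'_mem U hne), ← hWmin]
  refine hc W hW hWne ?_ (e a) (mem_insert_of_mem (mem_image_of_mem e ha))
  rw [hWmax, hWmin, erase_insert htU, herase _ (min'_mem U hne),
    color_image_eq_pinnedColoring he hXt hEH hU hne, hmaxmin]

theorem hasHomog_of_hasHomog_pinnedColoring {n : ℕ} (he : ∀ a, e a ∈ X) (hXt : ∀ x ∈ X, x < t)
    (hEH : IsEndHomogeneous c k X (insert t X)) (h : HasHomog k n (pinnedColoring c e t)) :
    HasHomog (k + 1) n c := by
  obtain ⟨S, hS, col, hcol⟩ := h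
  refine ⟨S.image e, by rw [card_image_of_injective _ e.injective, hS], col, fun T hT hTk => ?_⟩
  obtain ⟨U, hUS, rfl⟩ := subset_image_iff.1 hT
  have hU : #U = k + 1 := by rwa [card_image_of_injective _ e.injective] at hTk
  have hne : U.Nonempty := card_pos.1 (by omega)
  rw [color_image_eq_pinnedColoring he hXt hEH hU hne]
  exact hcol _ ((erase_subset _ _).trans hUS)
    (by rw [card_erase_of_mem (max'_mem U hne), hU, Nat.add_sub_cancel])

end Pinned

theorem stmt9_general (k n M : ℕ) (hk : 3 ≤ k)
    (h : ∀ c : Finset (Fin M) → Bool, IsTransitive k c → HasHomog k n c) :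
    ∀ c : Finset (Fin (2 ^ M ^ k)) → Bool,
      IsTransitive (k + 1) c → HasHomog (k + 1) n c := by
  intro c hc
  obtain ⟨X, hX, t, hXt, hEH⟩ :=
    exists_isEndHomogeneous c (M := M) (by omega : 2 ≤ k) univ (by simp)
  have he := X.orderEmbOfFin_mem hX
  exact hasHomog_of_hasHomog_pinnedColoring he hXt hEH
    (h _ (isTransitive_pinnedColoring he hXt hEH hc))

/-- **Induction step (recurrence (1)) in the proof of Theorem 1.4**:
if every transitive 2-coloring of the `k`-element subsets of `{1, …, M}` admits an `n`-element
homogeneous subset, then every transitive 2-coloring of the `(k+1)`-element subsets of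
`{1, …, N}` with `N = 2^{M^k}` admits an `n`-element homogeneous subset. -/
theorem stmt9 (k n M : ℕ) (hk : 3 ≤ k) (hn : 1 ≤ n) (hM : 0 < M)
    (h : ∀ c : Finset (Fin M) → Bool, IsTransitive k c → HasHomog k n c) :
    ∀ c : Finset (Fin (2 ^ M ^ k)) → Bool,
      IsTransitive (k + 1) c → HasHomog (k + 1) n c :=
  stmt9_general k n M hk h
end

section
/- For every fixed k ≥ 3 there exists a constant C (depending only on k) such that for all n ≥ 1, every transitive 2-coloring of the (k+1)-element subsets of {1, …, twr_k(C·n)} admits an n-element homogeneous subset; i.e., the Ramsey number for transitive 2-colorings of (k+1)-tuples is at most twr_k(O(n)). -/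
/-- The tower function: `twr 1 x = x` and `twr (i+1) x = 2 ^ twr i x`. -/
def twr : ℕ → ℕ → ℕ
  | 0, x => x
  | 1, x => x
  | n + 2, x => 2 ^ twr (n + 1) x

/-!
A transitive colouring is constant on `S` as soon as all sets of `ℓ` consecutive elements of `S`
(the edges of the tight path on `S`) have one colour: any other `ℓ`-subset of `S` arises by deleting
a vertex from an `(ℓ+1)`-subset whose first and last `ℓ` elements lie in `S` minus its maximum resp.
minimum, and so have that colour by induction on `S`.

It remains to find monochromatic tight paths. For triples, `2^(2n) + 1` vertices suffice: label a
pair `u < v` by the sizes of the longest red and blue tight paths ending in `u, v`. A triple `u v w`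
makes one label of `v w` larger than that of `u v`, so `v` is determined by the upper closure of the
labels of the pairs `v w`, an upper set of `[n]²`, and there are at most `2^(2n)` of those. For
`w + 1 > 3` vertices per edge, the Erdős–Rado argument finds a large end-homogeneous set, on which
the colour of a `(w+1)`-set only depends on its first `w` elements; a tight path for this induced
colouring of `w`-sets is one for the original colouring. Each step costs one exponential, hence
tower height `k` for `(k+1)`-sets.
-/

open Finset

namespace TransitiveRamsey

variable {α : Type*} [LinearOrder α]

section TightPaths

variable {c : Finset α → Bool} {ℓ : ℕ} {col : Bool}

def OrdConnectedIn (S W : Finset α) : Prop :=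
  ∀ a ∈ W, ∀ b ∈ W, ∀ s ∈ S, a ≤ s → s ≤ b → s ∈ W

variable (c ℓ col) in
/-- The `ℓ`-sets of consecutive elements of `S`, i.e. the edges of the tight path on `S`, all have
colour `col`. -/
def IsMonoTightPath (S : Finset α) : Prop :=
  ∀ W ⊆ S, W.card = ℓ → OrdConnectedIn S W → c W = col

lemma OrdConnectedIn.self (S : Finset α) : OrdConnectedIn S S :=
  fun _ _ _ _ _ hs _ _ => hs

lemma OrdConnectedIn.mono {S S' W : Finset α} (h : OrdConnectedIn S W) (hS : S' ⊆ S) :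
    OrdConnectedIn S' W :=
  fun a ha b hb s hs => h a ha b hb s (hS hs)

lemma OrdConnectedIn.erase_max' {S W : Finset α} (h : OrdConnectedIn S W) (hW : W.Nonempty) :
    OrdConnectedIn S (W.erase (W.max' hW)) := by
  intro a ha b hb s hs has hsb
  have hb' : b < W.max' hW :=
    lt_of_le_of_ne (W.le_max' b (mem_of_mem_erase hb)) (ne_of_mem_erase hb)
  exact mem_erase.2 ⟨(hsb.trans_lt hb').ne,
    h a (mem_of_mem_erase ha) b (mem_of_mem_erase hb) s hs has hsb⟩

lemma IsMonoTightPath.of_card_lt {S : Finset α} (col : Bool) (hS : S.card < ℓ) :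
    IsMonoTightPath c ℓ col S :=
  fun W hW hWc _ => absurd (card_le_card hW) (by omega)

lemma IsMonoTightPath.erase_max' {S : Finset α} (hS : IsMonoTightPath c ℓ col S)
    (hne : S.Nonempty) : IsMonoTightPath c ℓ col (S.erase (S.max' hne)) := by
  refine fun W hW hWc hWS => hS W (hW.trans (erase_subset _ _)) hWc ?_
  intro a ha b hb s hs has hsb
  have hb' : b < S.max' hne :=
    lt_of_le_of_ne (S.le_max' b (mem_of_mem_erase (hW hb))) (ne_of_mem_erase (hW hb))
  exact hWS a ha b hb s (mem_erase.2 ⟨(hsb.trans_lt hb').ne, hs⟩) has hsb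

lemma IsMonoTightPath.erase_min' {S : Finset α} (hS : IsMonoTightPath c ℓ col S)
    (hne : S.Nonempty) : IsMonoTightPath c ℓ col (S.erase (S.min' hne)) := by
  refine fun W hW hWc hWS => hS W (hW.trans (erase_subset _ _)) hWc ?_
  intro a ha b hb s hs has hsb
  have ha' : S.min' hne < a :=
    lt_of_le_of_ne (S.min'_le a (mem_of_mem_erase (hW ha))) (ne_of_mem_erase (hW ha)).symm
  exact hWS a ha b hb s (mem_erase.2 ⟨(ha'.trans_le has).ne', hs⟩) has hsb

end TightPaths

lemma erase_max'_subset_erase_max' {S T : Finset α} (hTS : T ⊆ S) (hT : T.Nonempty)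
    (hS : S.Nonempty) : T.erase (T.max' hT) ⊆ S.erase (S.max' hS) := by
  intro t ht
  refine mem_erase.2 ⟨fun h => ne_of_mem_erase ht ?_, hTS (mem_of_mem_erase ht)⟩
  exact le_antisymm (T.le_max' t (mem_of_mem_erase ht)) (h ▸ max'_subset hT hTS)

lemma erase_min'_subset_erase_min' {S T : Finset α} (hTS : T ⊆ S) (hT : T.Nonempty)
    (hS : S.Nonempty) : T.erase (T.min' hT) ⊆ S.erase (S.min' hS) := by
  intro t ht
  refine mem_erase.2 ⟨fun h => ne_of_mem_erase ht ?_, hTS (mem_of_mem_erase ht)⟩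
  exact le_antisymm (h ▸ min'_subset hT hTS) (T.min'_le t (mem_of_mem_erase ht))

theorem IsMonoTightPath.forall_eq_of_isTransitive {N ℓ : ℕ} {c : Finset (Fin N) → Bool}
    (hc : IsTransitive ℓ c) {col : Bool} {S : Finset (Fin N)} (hS : IsMonoTightPath c ℓ col S) :
    ∀ T ⊆ S, T.card = ℓ → c T = col := by
  induction S using Finset.strongInduction with
  | H S IH =>
    intro T hTS hT
    obtain rfl | ⟨u, huS, huT⟩ := hTS.eq_or_ssubset.imp_right exists_of_ssubset
    · exact hS T subset_rfl hT (OrdConnectedIn.self T)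
    have hSne : S.Nonempty := ⟨u, huS⟩
    have hT'S : insert u T ⊆ S := insert_subset huS hTS
    have hT'card : (insert u T).card = ℓ + 1 := by rw [card_insert_of_notMem huT, hT]
    have hT'ne : (insert u T).Nonempty := insert_nonempty u T
    have hlast : c ((insert u T).erase ((insert u T).max' hT'ne)) = col :=
      IH _ (erase_ssubset (S.max'_mem hSne)) (hS.erase_max' hSne) _
        (erase_max'_subset_erase_max' hT'S hT'ne hSne)
        (by rw [card_erase_of_mem (max'_mem _ _), hT'card, Nat.add_sub_cancel])
    have hfirst : c ((insert u T).erase ((insert u T).min' hT'ne)) = col :=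
      IH _ (erase_ssubset (S.min'_mem hSne)) (hS.erase_min' hSne) _
        (erase_min'_subset_erase_min' hT'S hT'ne hSne)
        (by rw [card_erase_of_mem (min'_mem _ _), hT'card, Nat.add_sub_cancel])
    have := hc _ hT'card hT'ne (hlast.trans hfirst.symm) u (mem_insert_self u T)
    rwa [erase_insert huT, hfirst] at this

section UpperSets

variable {n : ℕ}

noncomputable def rowCount (s : Set (Fin n × Fin n)) (b : Fin n) : ℕ := {a | (a, b) ∈ s}.ncard

lemma rowCount_le (s : Set (Fin n × Fin n)) (b : Fin n) : rowCount s b ≤ n :=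
  (Set.ncard_le_card _).trans_eq (Nat.card_eq_fintype_card.trans (Fintype.card_fin n))

lemma rowCount_add_strictMono {s : Set (Fin n × Fin n)} (hs : IsUpperSet s) :
    StrictMono fun b => rowCount s b + b := by
  intro b b' hbb'
  have : rowCount s b ≤ rowCount s b' :=
    Set.ncard_le_ncard fun a ha => hs (Prod.mk_le_mk.2 ⟨le_rfl, hbb'.le⟩) ha
  dsimp only
  omega

lemma eq_of_rowCount_eq {s t : Set (Fin n × Fin n)} (hs : IsUpperSet s) (ht : IsUpperSet t)
    (h : rowCount s = rowCount t) : s = t := by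
  have hrow : ∀ b, {a | (a, b) ∈ s} = {a | (a, b) ∈ t} := by
    intro b
    have mono : Monotone fun a : Fin n => (a, b) := fun a a' h => Prod.mk_le_mk.2 ⟨h, le_rfl⟩
    rcases (hs.preimage mono).total (ht.preimage mono) with hst | hts
    · exact Set.eq_of_subset_of_ncard_le hst (congrFun h b).ge
    · exact (Set.eq_of_subset_of_ncard_le hts (congrFun h b).le).symm
  ext ⟨a, b⟩
  exact Set.ext_iff.1 (hrow b) a

/-- An upper set of `[n]²` is determined by its row sizes `r b`, which increase with `b`, hence by
the set of the `r b + b`, a subset of `[0, 2n)`. -/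
theorem ncard_setOf_isUpperSet_le (n : ℕ) :
    {s : Set (Fin n × Fin n) | IsUpperSet s}.ncard ≤ 2 ^ (2 * n) := by
  let code : Set (Fin n × Fin n) → Finset ℕ := fun s => univ.image fun b => rowCount s b + b
  calc {s : Set (Fin n × Fin n) | IsUpperSet s}.ncard
      ≤ ((range (2 * n)).powerset : Set (Finset ℕ)).ncard := by
        refine Set.ncard_le_ncard_of_injOn code (fun s _ => ?_) (fun s hs t ht hst => ?_)
        · simp only [coe_powerset, Set.mem_preimage, Set.mem_powerset_iff, coe_subset, code]
          intro m hm
          obtain ⟨b, -, rfl⟩ := mem_image.1 hm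
          have := rowCount_le s b
          simp only [mem_range]
          omega
        · have hrange :
              Set.range (fun b => rowCount s b + b) = Set.range (fun b => rowCount t b + b) := by
            simpa [code, ← Set.image_univ] using congrArg (fun u : Finset ℕ => (u : Set ℕ)) hst
          have := ((rowCount_add_strictMono hs).range_inj (rowCount_add_strictMono ht)).1 hrange
          exact eq_of_rowCount_eq hs ht (funext fun b => by simpa using congrFun this b)
    _ = 2 ^ (2 * n) := by rw [Set.ncard_coe_finset, card_powerset, card_range]

end UpperSets

theorem card_le_of_forall_lt_or_lt {n : ℕ} (G : Finset α) (L₁ L₂ : α → α → Fin n)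
    (h : ∀ u ∈ G, ∀ v ∈ G, ∀ w ∈ G, u < v → v < w → L₁ u v < L₁ v w ∨ L₂ u v < L₂ v w) :
    G.card ≤ 2 ^ (2 * n) := by
  let F : α → Set (Fin n × Fin n) := fun v =>
    upperClosure ((fun w => (L₁ v w, L₂ v w)) '' {w | w ∈ G ∧ v < w})
  have hF : ∀ u ∈ G, ∀ v ∈ G, u < v → F u ≠ F v := by
    intro u hu v hv huv hFuv
    have hmem : (L₁ u v, L₂ u v) ∈ F v :=
      hFuv ▸ subset_upperClosure ⟨v, ⟨hv, huv⟩, rfl⟩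
    obtain ⟨-, ⟨w, ⟨hw, hvw⟩, rfl⟩, hle⟩ := mem_upperClosure.1 hmem
    rcases h u hu v hv w hw huv hvw with h₁ | h₂
    · exact (Prod.mk_le_mk.1 hle).1.not_gt h₁
    · exact (Prod.mk_le_mk.1 hle).2.not_gt h₂
  calc G.card = (G : Set α).ncard := (Set.ncard_coe_finset G).symm
    _ ≤ {s : Set (Fin n × Fin n) | IsUpperSet s}.ncard := by
      refine Set.ncard_le_ncard_of_injOn F (fun v _ => (upperClosure _).upper) ?_
      intro u hu v hv hFuv
      rcases lt_trichotomy u v with huv | rfl | hvu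
      · exact absurd hFuv (hF u hu v hv huv)
      · rfl
      · exact absurd hFuv.symm (hF v hv u hu hvu)
    _ ≤ 2 ^ (2 * n) := ncard_setOf_isUpperSet_le n

section ThreeUniform

def EndsWith (S : Finset α) (u v : α) : Prop :=
  u < v ∧ u ∈ S ∧ v ∈ S ∧ ∀ s ∈ S, s ≠ v → s ≤ u

lemma EndsWith.le {S : Finset α} {u v : α} (h : EndsWith S u v) {s : α} (hs : s ∈ S) :
    s ≤ v := by
  obtain ⟨huv, -, -, hlast⟩ := h
  by_cases hsv : s = v
  · exact hsv.le
  · exact (hlast s hs hsv).trans huv.le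

lemma IsMonoTightPath.insert_of_endsWith {c : Finset α → Bool} {col : Bool} {S : Finset α}
    {u v w : α} (hS : IsMonoTightPath c 3 col S) (hend : EndsWith S u v) (hvw : v < w)
    (hc : c {u, v, w} = col) : IsMonoTightPath c 3 col (insert w S) := by
  obtain ⟨huv, huS, hvS, hlast⟩ := hend
  intro W hW hWc hWS
  by_cases hwW : w ∈ W
  · obtain ⟨a, haW, hav⟩ :=
      exists_mem_ne (s := W.erase w) (by rw [card_erase_of_mem hwW, hWc]; omega) v
    have haS : a ∈ S :=
      (mem_insert.1 (hW (mem_of_mem_erase haW))).resolve_left (ne_of_mem_erase haW)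
    have hau : a ≤ u := hlast a haS hav
    have hsub : {u, v, w} ⊆ W := by
      refine insert_subset ?_ (insert_subset ?_ (singleton_subset_iff.2 hwW))
      · exact hWS a (mem_of_mem_erase haW) w hwW u (mem_insert_of_mem huS) hau
          (huv.trans hvw).le
      · exact hWS a (mem_of_mem_erase haW) w hwW v (mem_insert_of_mem hvS)
          (hau.trans huv.le) hvw.le
    have hcard : ({u, v, w} : Finset α).card = 3 :=
      card_eq_three.2 ⟨u, v, w, huv.ne, (huv.trans hvw).ne, hvw.ne, rfl⟩
    rwa [← eq_of_subset_of_card_le hsub (by rw [hWc, hcard])]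
  · have hWS' : W ⊆ S := (subset_insert_iff_of_notMem hwW).1 hW
    exact hS W hWS' hWc (hWS.mono (subset_insert w S))

variable (c : Finset α → Bool) (G : Finset α)

open Classical in
noncomputable def tightPathsEndingWith (col : Bool) (u v : α) : Finset (Finset α) :=
  {S ∈ G.powerset | IsMonoTightPath c 3 col S ∧ EndsWith S u v}

noncomputable def maxTightPathCard (col : Bool) (u v : α) : ℕ :=
  (tightPathsEndingWith c G col u v).sup card

variable {c G}

lemma mem_tightPathsEndingWith {col : Bool} {u v : α} {S : Finset α} :
    S ∈ tightPathsEndingWith c G col u v ↔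
      S ⊆ G ∧ IsMonoTightPath c 3 col S ∧ EndsWith S u v := by
  classical
  simp [tightPathsEndingWith]

lemma pair_mem_tightPathsEndingWith (col : Bool) {u v : α} (hu : u ∈ G) (hv : v ∈ G)
    (huv : u < v) :
    {u, v} ∈ tightPathsEndingWith c G col u v := by
  refine mem_tightPathsEndingWith.2 ⟨insert_subset hu (singleton_subset_iff.2 hv),
    IsMonoTightPath.of_card_lt col ((card_le_two).trans_lt (by norm_num)),
    huv, mem_insert_self u {v}, mem_insert_of_mem (mem_singleton_self v), ?_⟩
  intro s hs hsv
  rcases mem_insert.1 hs with rfl | hs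
  · exact le_rfl
  · exact absurd (mem_singleton.1 hs) hsv

lemma maxTightPathCard_lt_maxTightPathCard {col : Bool} {u v w : α} (hu : u ∈ G) (hv : v ∈ G)
    (hw : w ∈ G) (huv : u < v) (hvw : v < w) (hc : c {u, v, w} = col) :
    maxTightPathCard c G col u v < maxTightPathCard c G col v w := by
  obtain ⟨S, hSmem, hS⟩ :=
    exists_mem_eq_sup _ ⟨_, pair_mem_tightPathsEndingWith col hu hv huv⟩ card
  obtain ⟨hSG, hSpath, hend⟩ := mem_tightPathsEndingWith.1 hSmem
  have hwS : w ∉ S := fun h => (hend.le h).not_gt hvw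
  have hmem : insert w S ∈ tightPathsEndingWith c G col v w := by
    refine mem_tightPathsEndingWith.2 ⟨insert_subset hw hSG,
      hSpath.insert_of_endsWith hend hvw hc, hvw, mem_insert_of_mem hend.2.2.1,
      mem_insert_self w S, fun s hs hsw => hend.le ((mem_insert.1 hs).resolve_left hsw)⟩
  calc maxTightPathCard c G col u v = S.card := hS
    _ < (insert w S).card := by rw [card_insert_of_notMem hwS]; omega
    _ ≤ maxTightPathCard c G col v w := le_sup hmem

end ThreeUniform

theorem exists_monoTightPath_three (c : Finset α → Bool) (G : Finset α) (n : ℕ)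
    (hG : 2 ^ (2 * n) < G.card) :
    ∃ col S, S ⊆ G ∧ n ≤ S.card ∧ IsMonoTightPath c 3 col S := by
  by_contra! hnone
  have hn : 0 < n := Nat.pos_of_ne_zero fun hn =>
    hnone true ∅ (empty_subset G) (hn ▸ le_rfl) (IsMonoTightPath.of_card_lt true (by simp))
  have hlt : ∀ col u v, maxTightPathCard c G col u v < n := by
    intro col u v
    refine (Finset.sup_lt_iff (show (⊥ : ℕ) < n from hn)).2 fun S hS => ?_
    obtain ⟨hSG, hSpath, -⟩ := mem_tightPathsEndingWith.1 hS
    by_contra! hle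
    exact hnone col S hSG hle hSpath
  have := card_le_of_forall_lt_or_lt G (fun u v => ⟨_, hlt true u v⟩)
    (fun u v => ⟨_, hlt false u v⟩) fun u hu v hv w hw huv hvw => by
      cases hcol : c {u, v, w}
      · exact Or.inr (maxTightPathCard_lt_maxTightPathCard hu hv hw huv hvw hcol)
      · exact Or.inl (maxTightPathCard_lt_maxTightPathCard hu hv hw huv hvw hcol)
  omega

lemma exists_le_card_forall_eq {β γ : Type*} (C : Finset β) (T : Finset γ) (f : β → γ → Bool)
    {m : ℕ} (h : 2 ^ T.card * m ≤ C.card) :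
    ∃ C' ⊆ C, m ≤ C'.card ∧ ∀ y ∈ C', ∀ z ∈ C', ∀ t ∈ T, f y t = f z t := by
  classical
  obtain ⟨g, -, hg⟩ := exists_le_card_fiber_of_mul_le_card_of_maps_to
    (f := fun y (t : T) => f y t) (fun _ _ => mem_univ _) univ_nonempty
    (by rwa [card_univ, Fintype.card_fun, Fintype.card_coe, Fintype.card_bool])
  refine ⟨_, filter_subset _ C, hg, fun y hy z hz t ht => ?_⟩
  have hyz := (mem_filter.1 hy).2.trans (mem_filter.1 hz).2.symm
  exact congrFun hyz ⟨t, ht⟩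

section EndHomogeneous

variable (w : ℕ) (c : Finset α → Bool)

def IsEndHomogeneousOn (P Y : Finset α) : Prop :=
  ∀ S ⊆ P, S.card = w → ∀ y ∈ Y, ∀ z ∈ Y, (∀ s ∈ S, s < y) → (∀ s ∈ S, s < z) →
    c (insert y S) = c (insert z S)

/-- `ehBound w p m` candidates above an end-homogeneous prefix of `p` vertices suffice to extend it
by `m` vertices: the least candidate `x` is added, and the other candidates are split into at most
`2 ^ (p + 1) ^ w` classes by the colours of `S ∪ {y}` for the `w`-sets `S` of the new prefix. -/
def ehBound : ℕ → ℕ → ℕ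
  | _, 0 => 0
  | p, m + 1 => 1 + 2 ^ ((p + 1) ^ w) * ehBound (p + 1) m

variable {w c}

lemma IsEndHomogeneousOn.mono_right {P Y Y' : Finset α} (h : IsEndHomogeneousOn w c P Y)
    (hY : Y' ⊆ Y) : IsEndHomogeneousOn w c P Y' :=
  fun S hS hSc y hy z hz => h S hS hSc y (hY hy) z (hY hz)

lemma IsEndHomogeneousOn.insert_of_forall_eq {P C C' : Finset α} {x : α}
    (h : IsEndHomogeneousOn w c P (P ∪ C)) (hPC : ∀ a ∈ P, ∀ b ∈ C, a < b) (hx : x ∈ C)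
    (hC' : C' ⊆ C) (hxC' : ∀ y ∈ C', x < y)
    (hC'eq : ∀ y ∈ C', ∀ z ∈ C', ∀ S ∈ powersetCard w (insert x P),
      c (insert y S) = c (insert z S)) :
    IsEndHomogeneousOn w c (insert x P) (insert x P ∪ C') := by
  intro S hS hSc y hy z hz hSy hSz
  by_cases hxS : x ∈ S
  · have habove : ∀ t ∈ insert x P ∪ C', x < t → t ∈ C' := by
      intro t ht hxt
      rcases mem_union.1 ht with ht | ht
      · rcases mem_insert.1 ht with rfl | ht
        · exact absurd hxt (lt_irrefl t)
        · exact absurd (hPC t ht x hx) hxt.not_gt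
      · exact ht
    exact hC'eq y (habove y hy (hSy x hxS)) z (habove z hz (hSz x hxS)) S
      (mem_powersetCard.2 ⟨hS, hSc⟩)
  · have hsub : insert x P ∪ C' ⊆ P ∪ C :=
      union_subset (insert_subset (mem_union_right P hx) subset_union_left)
        (hC'.trans subset_union_right)
    exact h S ((subset_insert_iff_of_notMem hxS).1 hS) hSc y (hsub hy) z (hsub hz) hSy hSz

lemma exists_isEndHomogeneousOn_union (m : ℕ) {P C : Finset α} (hPC : ∀ a ∈ P, ∀ b ∈ C, a < b)
    (h : IsEndHomogeneousOn w c P (P ∪ C)) (hC : ehBound w P.card m ≤ C.card) :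
    ∃ X ⊆ C, m ≤ X.card ∧ IsEndHomogeneousOn w c (P ∪ X) (P ∪ X) := by
  induction m generalizing P C with
  | zero =>
    exact ⟨∅, empty_subset C, le_rfl, by simpa using h.mono_right subset_union_left⟩
  | succ m IH =>
    have hCne : C.Nonempty := card_pos.1 (by simp only [ehBound] at hC; omega)
    set x := C.min' hCne
    have hxC : x ∈ C := C.min'_mem hCne
    have hxP : x ∉ P := fun hxP => lt_irrefl x (hPC x hxP x hxC)
    have hT : (powersetCard w (insert x P)).card ≤ (P.card + 1) ^ w := by
      rw [card_powersetCard, card_insert_of_notMem hxP]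
      exact Nat.choose_le_pow _ _
    obtain ⟨C', hC'C, hC'card, hC'eq⟩ := exists_le_card_forall_eq (C.erase x)
      (powersetCard w (insert x P)) (fun y S => c (insert y S)) (m := ehBound w (P.card + 1) m)
      (by
        rw [card_erase_of_mem hxC]
        have := Nat.mul_le_mul_right (ehBound w (P.card + 1) m)
          (Nat.pow_le_pow_right two_pos hT)
        simp only [ehBound] at hC
        omega)
    have hxC' : ∀ y ∈ C', x < y := fun y hy =>
      lt_of_le_of_ne (C.min'_le y (mem_of_mem_erase (hC'C hy))) (ne_of_mem_erase (hC'C hy)).symm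
    have hPC' : ∀ a ∈ insert x P, ∀ b ∈ C', a < b := by
      intro a ha b hb
      rcases mem_insert.1 ha with rfl | ha
      · exact hxC' b hb
      · exact hPC a ha b (mem_of_mem_erase (hC'C hb))
    obtain ⟨X, hXC', hXcard, hX⟩ := IH hPC'
      (h.insert_of_forall_eq hPC hxC (hC'C.trans (erase_subset x C)) hxC' hC'eq)
      (by rwa [card_insert_of_notMem hxP])
    have hxX : x ∉ X := fun hxX => lt_irrefl x (hxC' x (hXC' hxX))
    refine ⟨insert x X, insert_subset hxC ((hXC'.trans hC'C).trans (erase_subset x C)), ?_, ?_⟩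
    · rw [card_insert_of_notMem hxX]
      omega
    · rwa [union_insert, ← insert_union]

theorem exists_isEndHomogeneousOn (hw : 1 ≤ w) (G : Finset α) (m : ℕ)
    (h : ehBound w 0 m ≤ G.card) :
    ∃ X ⊆ G, m ≤ X.card ∧ IsEndHomogeneousOn w c X X := by
  have h₀ : IsEndHomogeneousOn w c ∅ (∅ ∪ G) := fun S hS hSc => by
    rw [subset_empty.1 hS, card_empty] at hSc
    omega
  simpa using exists_isEndHomogeneousOn_union m (by simp) h₀ (by simpa using h)

lemma IsEndHomogeneousOn.exists_eq_erase_max' {X : Finset α}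
    (hX : IsEndHomogeneousOn w c X X) :
    ∃ d : Finset α → Bool, ∀ A ⊆ X, A.card = w + 1 → ∀ hA : A.Nonempty,
      c A = d (A.erase (A.max' hA)) := by
  classical
  refine ⟨fun S => if hS : ∃ y ∈ X, ∀ s ∈ S, s < y then c (insert hS.choose S) else false, ?_⟩
  intro A hAX hAc hA
  have hmax : ∀ s ∈ A.erase (A.max' hA), s < A.max' hA := fun s hs =>
    lt_of_le_of_ne (A.le_max' s (mem_of_mem_erase hs)) (ne_of_mem_erase hs)
  have hex : ∃ y ∈ X, ∀ s ∈ A.erase (A.max' hA), s < y := ⟨_, hAX (A.max'_mem hA), hmax⟩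
  simp only [dif_pos hex]
  conv_lhs => rw [← insert_erase (A.max'_mem hA)]
  exact hX _ ((erase_subset _ _).trans hAX)
    (by rw [card_erase_of_mem (A.max'_mem hA), hAc, Nat.add_sub_cancel]) _ (hAX (A.max'_mem hA)) _
    hex.choose_spec.1 hmax hex.choose_spec.2

lemma IsMonoTightPath.of_eq_erase_max' {d c : Finset α → Bool} {X S : Finset α} {col : Bool}
    (hd : ∀ A ⊆ X, A.card = w + 1 → ∀ hA : A.Nonempty, c A = d (A.erase (A.max' hA)))
    (hSX : S ⊆ X) (hS : IsMonoTightPath d w col S) : IsMonoTightPath c (w + 1) col S := by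
  intro W hWS hWc hW
  have hWne : W.Nonempty := card_pos.1 (by omega)
  rw [hd W (hWS.trans hSX) hWc hWne]
  exact hS _ ((erase_subset _ _).trans hWS)
    (by rw [card_erase_of_mem (W.max'_mem hWne), hWc, Nat.add_sub_cancel]) (hW.erase_max' hWne)

end EndHomogeneous

def tightPathBound (n : ℕ) : ℕ → ℕ
  | 0 => 2 ^ (2 * n) + 1
  | j + 1 => ehBound (j + 3) 0 (tightPathBound n j)

theorem exists_monoTightPath (j n : ℕ) (c : Finset α → Bool) (G : Finset α)
    (hG : tightPathBound n j ≤ G.card) :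
    ∃ col S, S ⊆ G ∧ n ≤ S.card ∧ IsMonoTightPath c (j + 3) col S := by
  induction j generalizing c G with
  | zero => exact exists_monoTightPath_three c G n hG
  | succ j IH =>
    obtain ⟨X, hXG, hXcard, hX⟩ := exists_isEndHomogeneousOn (by omega) G _ hG
    obtain ⟨d, hd⟩ := hX.exists_eq_erase_max'
    obtain ⟨col, S, hSX, hScard, hS⟩ := IH d X hXcard
    exact ⟨col, S, hSX.trans hXG, hScard, hS.of_eq_erase_max' hd hSX⟩

lemma ehBound_lt (w p m : ℕ) : ehBound w p m < 2 ^ (m * (p + m) ^ w) := by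
  induction m generalizing p with
  | zero => simp [ehBound]
  | succ m IH =>
    have hIH := IH (p + 1)
    have htwo : 2 ≤ 2 ^ ((p + 1) ^ w) := Nat.le_self_pow (pow_pos p.succ_pos w).ne' 2
    have hmul := Nat.mul_le_mul_left (2 ^ ((p + 1) ^ w)) hIH
    have hexp : (p + 1) ^ w + m * (p + 1 + m) ^ w ≤ (m + 1) * (p + (m + 1)) ^ w := by
      have : (p + 1) ^ w ≤ (p + (m + 1)) ^ w := Nat.pow_le_pow_left (by omega) w
      rw [show p + 1 + m = p + (m + 1) by omega, Nat.succ_mul]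
      omega
    calc ehBound w p (m + 1) = 1 + 2 ^ ((p + 1) ^ w) * ehBound w (p + 1) m := rfl
      _ < 2 ^ ((p + 1) ^ w) * 2 ^ (m * (p + 1 + m) ^ w) := by rw [Nat.mul_succ] at hmul; omega
      _ ≤ 2 ^ ((m + 1) * (p + (m + 1)) ^ w) := by
        rw [← pow_add]
        exact Nat.pow_le_pow_right two_pos hexp

lemma mul_two_pow_le_two_pow_mul (m : ℕ) {t : ℕ} (ht : 1 ≤ t) : m * 2 ^ t ≤ 2 ^ (m * t) := by
  rcases m with _ | m
  · simp
  calc (m + 1) * 2 ^ t ≤ 2 ^ m * 2 ^ t := Nat.mul_le_mul_right _ (Nat.lt_two_pow_self)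
    _ ≤ 2 ^ (m * t) * 2 ^ t :=
      Nat.mul_le_mul_right _ (Nat.pow_le_pow_right two_pos (Nat.le_mul_of_pos_right m ht))
    _ = 2 ^ ((m + 1) * t) := by rw [← pow_add, Nat.succ_mul]

lemma one_le_twr (i : ℕ) {x : ℕ} (hx : 1 ≤ x) : 1 ≤ twr i x := by
  rcases i with _ | _ | i
  exacts [hx, hx, Nat.one_le_two_pow]

lemma mul_twr_le_twr_mul (i m : ℕ) {x : ℕ} (hx : 1 ≤ x) :
    m * twr (i + 1) x ≤ twr (i + 1) (m * x) := by
  induction i with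
  | zero => exact le_rfl
  | succ i IH =>
    calc m * 2 ^ twr (i + 1) x ≤ 2 ^ (m * twr (i + 1) x) :=
          mul_two_pow_le_two_pow_mul m (one_le_twr _ hx)
      _ ≤ 2 ^ twr (i + 1) (m * x) := Nat.pow_le_pow_right two_pos IH

lemma tightPathBound_le_twr (j : ℕ) :
    ∃ D, 0 < D ∧ ∀ n, 1 ≤ n → tightPathBound n j ≤ twr (j + 2) (D * n) := by
  induction j with
  | zero =>
    refine ⟨3, by norm_num, fun n hn => ?_⟩
    calc 2 ^ (2 * n) + 1 ≤ 2 ^ (2 * n) * 2 := by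
          have := Nat.one_le_two_pow (n := 2 * n)
          omega
      _ = 2 ^ (2 * n + 1) := (pow_succ 2 _).symm
      _ ≤ 2 ^ (3 * n) := Nat.pow_le_pow_right two_pos (by omega)
  | succ j IH =>
    obtain ⟨D, hD, hbound⟩ := IH
    refine ⟨(j + 4) * D, by positivity, fun n hn => ?_⟩
    set R := tightPathBound n j
    set t := twr (j + 1) (D * n)
    have hR : R ≤ 2 ^ t := hbound n hn
    calc tightPathBound n (j + 1) ≤ 2 ^ (R * (0 + R) ^ (j + 3)) := (ehBound_lt _ _ _).le
      _ = 2 ^ R ^ (j + 4) := by rw [zero_add, ← pow_succ']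
      _ ≤ 2 ^ 2 ^ ((j + 4) * t) := by
        rw [mul_comm, pow_mul]
        exact Nat.pow_le_pow_right two_pos (Nat.pow_le_pow_left hR _)
      _ ≤ 2 ^ 2 ^ twr (j + 1) ((j + 4) * (D * n)) :=
        Nat.pow_le_pow_right two_pos (Nat.pow_le_pow_right two_pos
          (mul_twr_le_twr_mul j _ (Nat.mul_pos hD hn)))
      _ = twr (j + 1 + 2) ((j + 4) * D * n) := by rw [mul_assoc]; rfl

end TransitiveRamsey

open TransitiveRamsey in
/-- **Theorem 1.4 (upper bound)**: for every fixed `k ≥ 3` there is a constant `C` such that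
for all `n ≥ 1`, every transitive 2-coloring of the `(k+1)`-element subsets of
`{1, …, twr_k(C·n)}` admits an `n`-element homogeneous subset;
i.e. `trrams_{k+1}(n) ≤ twr_k(O(n))`. -/
theorem stmt10 (k : ℕ) (hk : 3 ≤ k) :
    ∃ C : ℕ, 0 < C ∧ ∀ n : ℕ, 1 ≤ n →
      ∀ c : Finset (Fin (twr k (C * n))) → Bool,
        IsTransitive (k + 1) c → HasHomog (k + 1) n c := by
  obtain ⟨D, hD, hbound⟩ := tightPathBound_le_twr (k - 2)
  refine ⟨D, hD, fun n hn c hc => ?_⟩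
  have hk' : k - 2 + 2 = k ∧ k - 2 + 3 = k + 1 := by omega
  obtain ⟨col, S, -, hnS, hS⟩ := exists_monoTightPath (k - 2) n c univ
    (by simpa [hk'.1] using hbound n hn)
  rw [hk'.2] at hS
  obtain ⟨T, hTS, hTn⟩ := exists_subset_card_eq hnS
  exact ⟨T, hTn, col, fun A hAT hA => hS.forall_eq_of_isTransitive hc A (hAT.trans hTS) hA⟩
end

section
/- If every transitive 2-coloring of the (k+1)-element subsets of {1, …, N} admits an n-element homogeneous subset, then every set of N points in the plane in k-general position contains an n-point kth-order monotone subset (that is, ES_k(n) ≤ trrams_{k+1}(n)). -/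
/-!
In Lagrange form, `Δ_m(p) = ∑ᵢ yᵢ / ∏_{j ≠ i} (xᵢ - xⱼ)`, the divided difference is symmetric in
its points, and for `m + 2` points one gets `Δ_m(p ∖ a) - Δ_m(p ∖ b) = (x_b - x_a) Δ_{m+1}(p)`.
So when the points are sorted by `x`, the value of `Δ_m` after deleting one point is monotone in
the deleted point. Hence colouring the `(k+1)`-subsets of the `x`-sorted point set by the sign of
`Δ_k` is transitive, and a homogeneous `n`-set for this colouring is `k`th-order monotone.
-/

open Finset

lemma Fin.univ_erase_succAbove {n : ℕ} (c : Fin (n + 1)) (i : Fin n) :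
    univ.erase (c.succAbove i) = insert c ((univ.erase i).image c.succAbove) := by
  rw [image_erase Fin.succAbove_right_injective, Fin.image_succAbove_univ, compl_singleton,
    ← erase_insert_of_ne (Fin.succAbove_ne c i).symm, insert_erase (mem_univ _)]

lemma Fin.prod_univ_erase_succAbove {M : Type*} [CommMonoid M] {n : ℕ} (g : Fin (n + 1) → M)
    (c : Fin (n + 1)) (i : Fin n) :
    ∏ j ∈ univ.erase (c.succAbove i), g j = g c * ∏ j ∈ univ.erase i, g (c.succAbove j) := by
  rw [Fin.univ_erase_succAbove, prod_insert, prod_image Fin.succAbove_right_injective.injOn]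
  simp [Fin.succAbove_ne]

section DividedDifference

variable {n : ℕ}

noncomputable def divdiffSum (p : Fin n → ℝ × ℝ) : ℝ :=
  ∑ i, (p i).2 / ∏ j ∈ univ.erase i, ((p i).1 - (p j).1)

lemma divdiffSum_comp_succAbove (p : Fin (n + 1) → ℝ × ℝ)
    (hp : Function.Injective fun i => (p i).1) (c : Fin (n + 1)) :
    divdiffSum (fun i => p (c.succAbove i)) =
      ∑ t, (p t).2 * ((p t).1 - (p c).1) / ∏ j ∈ univ.erase t, ((p t).1 - (p j).1) := by
  rw [Fin.sum_univ_succAbove _ c, sub_self, mul_zero, zero_div, zero_add, divdiffSum]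
  refine sum_congr rfl fun i _ => ?_
  have hne : (p (c.succAbove i)).1 - (p c).1 ≠ 0 :=
    sub_ne_zero.mpr fun h => Fin.succAbove_ne c i (hp h)
  rw [Fin.prod_univ_erase_succAbove (fun j => (p (c.succAbove i)).1 - (p j).1),
    mul_comm, mul_div_mul_left _ _ hne]

lemma divdiffSum_succAbove_sub (p : Fin (n + 1) → ℝ × ℝ)
    (hp : Function.Injective fun i => (p i).1) (a b : Fin (n + 1)) :
    divdiffSum (fun i => p (a.succAbove i)) - divdiffSum (fun i => p (b.succAbove i)) =
      ((p b).1 - (p a).1) * divdiffSum p := by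
  rw [divdiffSum_comp_succAbove p hp, divdiffSum_comp_succAbove p hp, divdiffSum, mul_sum,
    ← sum_sub_distrib]
  exact sum_congr rfl fun t _ => by ring

theorem divdiff_eq_divdiffSum : ∀ (m : ℕ) (p : Fin (m + 1) → ℝ × ℝ),
    Function.Injective (fun i => (p i).1) → divdiff m p = divdiffSum p
  | 0, p, _ => by simp [divdiff, divdiffSum]
  | m + 1, p, hp => by
    have hends : (p (Fin.last (m + 1))).1 - (p 0).1 ≠ 0 :=
      sub_ne_zero.mpr fun h => Fin.last_pos.ne' (hp h)
    rw [divdiff, div_eq_iff hends, mul_comm,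
      divdiff_eq_divdiffSum m _ (hp.comp (Fin.succ_injective _)),
      divdiff_eq_divdiffSum m _ (hp.comp (Fin.castSucc_injective _)),
      ← divdiffSum_succAbove_sub p hp 0 (Fin.last (m + 1))]
    simp only [Fin.succAbove_zero, Fin.succAbove_last]

theorem divdiff_succAbove_sub {m : ℕ} (p : Fin (m + 2) → ℝ × ℝ)
    (hp : Function.Injective fun i => (p i).1) (a b : Fin (m + 2)) :
    divdiff m (fun i => p (a.succAbove i)) - divdiff m (fun i => p (b.succAbove i)) =
      ((p b).1 - (p a).1) * divdiff (m + 1) p := by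
  simp only [divdiff_eq_divdiffSum _ _ (hp.comp Fin.succAbove_right_injective),
    divdiff_eq_divdiffSum _ _ hp]
  exact divdiffSum_succAbove_sub p hp a b

theorem divdiff_succAbove_mem_uIcc {m : ℕ} (p : Fin (m + 2) → ℝ × ℝ)
    (hp : StrictMono fun i => (p i).1) (j : Fin (m + 2)) :
    divdiff m (fun i => p (j.succAbove i)) ∈
      Set.uIcc (divdiff m fun i => p i.succ) (divdiff m fun i => p i.castSucc) := by
  have hfirst := divdiff_succAbove_sub p hp.injective 0 j
  have hlast := divdiff_succAbove_sub p hp.injective j (Fin.last (m + 1))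
  simp only [Fin.succAbove_zero, Fin.succAbove_last] at hfirst hlast
  have h0 : 0 ≤ (p j).1 - (p 0).1 := sub_nonneg.mpr (hp.monotone (Fin.zero_le j))
  have hL : 0 ≤ (p (Fin.last (m + 1))).1 - (p j).1 := sub_nonneg.mpr (hp.monotone (Fin.le_last j))
  rw [Set.mem_uIcc]
  rcases le_total 0 (divdiff (m + 1) p) with hΔ | hΔ
  · have := mul_nonneg h0 hΔ
    have := mul_nonneg hL hΔ
    right
    constructor <;> linarith
  · have := mul_nonpos_of_nonneg_of_nonpos h0 hΔ
    have := mul_nonpos_of_nonneg_of_nonpos hL hΔ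
    left
    constructor <;> linarith

end DividedDifference

lemma Finset.erase_orderEmbOfFin {α : Type*} [LinearOrder α] {m : ℕ} (T : Finset α)
    (hT : T.card = m + 1) (j : Fin (m + 1)) :
    T.erase (T.orderEmbOfFin hT j) = univ.image fun i => T.orderEmbOfFin hT (j.succAbove i) := by
  calc T.erase (T.orderEmbOfFin hT j)
      = (univ.image (T.orderEmbOfFin hT)).erase (T.orderEmbOfFin hT j) := by
        rw [image_orderEmbOfFin_univ]
    _ = _ := by
        rw [← image_erase (T.orderEmbOfFin hT).injective, ← compl_singleton,
          ← Fin.image_succAbove_univ, image_image]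
        rfl

lemma le_iff_of_mem_uIcc {α : Type*} [LinearOrder α] {a b x c : α} (hx : x ∈ Set.uIcc a b)
    (hab : c ≤ a ↔ c ≤ b) : c ≤ x ↔ c ≤ a := by
  rcases Set.mem_uIcc.mp hx with ⟨hax, hxb⟩ | ⟨hbx, hxa⟩
  · exact ⟨fun h => hab.mpr (h.trans hxb), fun h => h.trans hax⟩
  · exact ⟨fun h => h.trans hxa, fun h => (hab.mp h).trans hbx⟩

section SignColoring

variable {k N : ℕ} (f : Fin N → ℝ × ℝ)

noncomputable def signColoring (k : ℕ) (T : Finset (Fin N)) : Bool :=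
  if hT : T.card = k + 1 then decide (0 ≤ divdiff k fun j => f (T.orderEmbOfFin hT j)) else true

lemma signColoring_image {t : Fin (k + 1) → Fin N} (ht : StrictMono t) :
    signColoring f k (univ.image t) = decide (0 ≤ divdiff k fun j => f (t j)) := by
  have hcard : (univ.image t).card = k + 1 := by
    rw [card_image_of_injective _ ht.injective, card_univ, Fintype.card_fin]
  rw [signColoring, dif_pos hcard,
    ← orderEmbOfFin_unique hcard (fun i => mem_image_of_mem t (mem_univ i)) ht]

lemma signColoring_isTransitive (hf : StrictMono fun i => (f i).1) :
    IsTransitive (k + 1) (signColoring f k) := by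
  intro T hT hne hends a ha
  set e := T.orderEmbOfFin hT
  have hmin : T.min' hne = e 0 := (orderEmbOfFin_zero hT (by omega)).symm
  have hmax : T.max' hne = e (Fin.last (k + 1)) := (orderEmbOfFin_last hT (by omega)).symm
  obtain ⟨j, rfl⟩ : a ∈ Set.range e := by rwa [range_orderEmbOfFin]
  have hcolor (i : Fin (k + 2)) : signColoring f k (T.erase (e i)) =
      decide (0 ≤ divdiff k fun l => f (e (i.succAbove l))) :=
    (erase_orderEmbOfFin T hT i).symm ▸
      signColoring_image f (e.strictMono.comp (Fin.strictMono_succAbove i))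
  rw [hmin, hmax, hcolor, hcolor, decide_eq_decide] at hends
  rw [hmin, hcolor, hcolor, decide_eq_decide]
  simp only [Fin.succAbove_zero, Fin.succAbove_last] at hends ⊢
  have hp : StrictMono fun i => (f (e i)).1 := hf.comp e.strictMono
  exact le_iff_of_mem_uIcc (divdiff_succAbove_mem_uIcc _ hp j) hends.symm

end SignColoring

lemma Finset.exists_strictMono_fst_enum {N : ℕ} (P : Finset (ℝ × ℝ))
    (hP : Set.InjOn Prod.fst (P : Set (ℝ × ℝ))) (hN : P.card = N) :
    ∃ f : Fin N → ℝ × ℝ, StrictMono (fun i => (f i).1) ∧ ∀ i, f i ∈ P := by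
  have hX : (P.image Prod.fst).card = N := by rw [card_image_of_injOn hP, hN]
  set e := (P.image Prod.fst).orderEmbOfFin hX
  have he (i : Fin N) : ∃ p ∈ (P : Set (ℝ × ℝ)), p.1 = e i :=
    mem_image.mp (orderEmbOfFin_mem _ hX i)
  refine ⟨fun i => Function.invFunOn Prod.fst P (e i), fun i j hij => ?_,
    fun i => Function.invFunOn_mem (he i)⟩
  simpa only [Function.invFunOn_eq (he i), Function.invFunOn_eq (he j)] using e.strictMono hij

lemma kOrderMonotone_image_of_homogeneous {k N : ℕ} (f : Fin N → ℝ × ℝ)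
    (hf : StrictMono fun i => (f i).1) {S : Finset (Fin N)} {col : Bool}
    (hS : ∀ T ⊆ S, T.card = k + 1 → signColoring f k T = col) :
    KOrderMonotone k (S.image f) := by
  have hsign (q : Fin (k + 1) → ℝ × ℝ) (hq : ∀ i, q i ∈ S.image f)
      (hqx : StrictMono fun i => (q i).1) : decide (0 ≤ divdiff k q) = col := by
    choose t ht hft using fun i => mem_image.mp (hq i)
    obtain rfl : (fun i => f (t i)) = q := funext hft
    have htmono : StrictMono t := fun i j hij => hf.lt_iff_lt.mp (hqx hij)
    rw [← signColoring_image f htmono]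
    exact hS _ (image_subset_iff.mpr fun i _ => ht i)
      (by rw [card_image_of_injective _ htmono.injective, card_univ, Fintype.card_fin])
  cases col
  · exact Or.inr fun q hq hqx => le_of_lt (not_le.mp (of_decide_eq_false (hsign q hq hqx)))
  · exact Or.inl fun q hq hqx => of_decide_eq_true (hsign q hq hqx)

/-- **`ES_k(n) ≤ trrams_{k+1}(n)`** (the easy inequality in Theorem 1.4): if every transitive
2-coloring of the `(k+1)`-element subsets of `{1, …, N}` admits an `n`-element homogeneous
subset, then every set of `N` points in the plane in `k`-general position contains an
`n`-point `k`-th order monotone subset. -/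
theorem stmt11 (k N n : ℕ)
    (h : ∀ c : Finset (Fin N) → Bool, IsTransitive (k + 1) c → HasHomog (k + 1) n c) :
    ∀ P : Finset (ℝ × ℝ), P.card = N → KGenPos k P →
      ∃ S ⊆ P, S.card = n ∧ KOrderMonotone k S := by
  intro P hPcard hgen
  obtain ⟨f, hf, hfP⟩ := P.exists_strictMono_fst_enum (fun p hp q hq => hgen.1 p hp q hq) hPcard
  obtain ⟨S, hScard, col, hS⟩ := h _ (signColoring_isTransitive f hf)
  refine ⟨S.image f, image_subset_iff.mpr fun i _ => hfP i, ?_,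
    kOrderMonotone_image_of_homogeneous f hf hS⟩
  rw [card_image_of_injective _ hf.injective.of_comp, hScard]
end
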